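/- arXiv:2602.20797 — 7 statements merged into one kernel-verified Lean document; each statement's English description precedes it below -/
import Mathlib

section
/- Let δ₁,…,δ₅ be complex numbers, closed under complex conjugation, with s₁ = 0, s₂ ≥ 0, s₃ ≥ 0, 4s₄ − s₂² ≥ 0 and 6s₅ − 5s₂s₃ ≥ 0. Then the 5×5 real matrix A with rows (0,1,0,0,0), (s₂/4, 0, 0, 1, 0), (√((6s₅−5s₂s₃)/30), 0, 0, 0, 0), (s₃/6, 0, 0, 0, 1), ((4s₄−s₂²)/16, s₃/6, √((6s₅−5s₂s₃)/30), s₂/4, 0) is entrywise nonnegative, persymmetric, and its characteristic polynomial over ℂ equals ∏ᵢ₌₁⁵(X−δᵢ); in particular (δ₁,…,δ₅) is persymmetrically realizable. -/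
open Matrix Polynomial
open scoped ComplexOrder

private theorem det_fin_four' {R : Type*} [CommRing R] (M : Matrix (Fin 4) (Fin 4) R) :
    M.det =
      M 0 0 * (M 1 1 * (M 2 2 * M 3 3 - M 2 3 * M 3 2) - M 1 2 * (M 2 1 * M 3 3 - M 2 3 * M 3 1)
        + M 1 3 * (M 2 1 * M 3 2 - M 2 2 * M 3 1))
      - M 0 1 * (M 1 0 * (M 2 2 * M 3 3 - M 2 3 * M 3 2) - M 1 2 * (M 2 0 * M 3 3 - M 2 3 * M 3 0)
        + M 1 3 * (M 2 0 * M 3 2 - M 2 2 * M 3 0))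
      + M 0 2 * (M 1 0 * (M 2 1 * M 3 3 - M 2 3 * M 3 1) - M 1 1 * (M 2 0 * M 3 3 - M 2 3 * M 3 0)
        + M 1 3 * (M 2 0 * M 3 1 - M 2 1 * M 3 0))
      - M 0 3 * (M 1 0 * (M 2 1 * M 3 2 - M 2 2 * M 3 1) - M 1 1 * (M 2 0 * M 3 2 - M 2 2 * M 3 0)
        + M 1 2 * (M 2 0 * M 3 1 - M 2 1 * M 3 0)) := by
  rw [Matrix.det_succ_row_zero]
  simp [Fin.sum_univ_succ, Matrix.det_fin_three, Fin.succAbove,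
    show (Fin.succ 2 : Fin 4) = 3 from rfl, show (Fin.castSucc 2 : Fin 4) = 2 from rfl,
    show ((1:Fin 4) < 3) from by decide, Fin.succ_zero_eq_one, Fin.succ_one_eq_two]
  ring

private theorem det_fin_five' {R : Type*} [CommRing R] (x a b c d : R) :
    Matrix.det !![x, -1, 0, 0, 0;
         -a, x, 0, -1, 0;
         -c, 0, x, 0, 0;
         -b, 0, 0, x, -1;
         -d, -b, -c, -a, x] =
    x^5 - (2*a) * x^3 - (2*b) * x^2 + (a^2 - d) * x - c^2 := by
  rw [Matrix.det_succ_row_zero]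
  simp [Fin.sum_univ_succ, det_fin_four', Fin.succAbove]
  ring

private theorem charpoly_eq' (a b c d : ℝ) :
    (Matrix.charpoly !![0, 1, 0, 0, 0;
         a, 0, 0, 1, 0;
         c, 0, 0, 0, 0;
         b, 0, 0, 0, 1;
         d, b, c, a, 0]) =
    X^5 - C (2*a) * X^3 - C (2*b) * X^2 + C (a^2 - d) * X - C (c^2) := by
  have hm : charmatrix !![0, 1, 0, 0, 0;
         a, 0, 0, 1, 0;
         c, 0, 0, 0, 0;
         b, 0, 0, 0, 1;
         d, b, c, a, 0] =
      !![(X:ℝ[X]), -1, 0, 0, 0;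
         -(C a), X, 0, -1, 0;
         -(C c), 0, X, 0, 0;
         -(C b), 0, 0, X, -1;
         -(C d), -(C b), -(C c), -(C a), X] := by
    ext i j
    fin_cases i <;> fin_cases j <;>
      simp [charmatrix_apply]
  rw [Matrix.charpoly, hm, det_fin_five']
  simp only [C_mul, C_sub, C_pow, map_ofNat]

/-- Case 1 of the main theorem: explicit persymmetric realization when
6s₅ - 5s₂s₃ ≥ 0. -/
theorem stmt_1 (δ : Fin 5 → ℂ) (s : ℕ → ℂ) (hs : ∀ k, s k = ∑ i, δ i ^ k)
    (hconj : Multiset.map (starRingEnd ℂ) (↑(List.ofFn δ) : Multiset ℂ)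
      = (↑(List.ofFn δ) : Multiset ℂ))
    (h1 : s 1 = 0) (h2 : 0 ≤ s 2) (h3 : 0 ≤ s 3)
    (h4 : 0 ≤ 4 * s 4 - (s 2) ^ 2) (h5 : 0 ≤ 6 * s 5 - 5 * s 2 * s 3) :
    let A : Matrix (Fin 5) (Fin 5) ℝ :=
      !![0, 1, 0, 0, 0;
         (s 2).re / 4, 0, 0, 1, 0;
         Real.sqrt ((6 * (s 5).re - 5 * (s 2).re * (s 3).re) / 30), 0, 0, 0, 0;
         (s 3).re / 6, 0, 0, 0, 1;
         (4 * (s 4).re - (s 2).re ^ 2) / 16, (s 3).re / 6,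
           Real.sqrt ((6 * (s 5).re - 5 * (s 2).re * (s 3).re) / 30), (s 2).re / 4, 0]
    (∀ i j, 0 ≤ A i j) ∧ (∀ i j, A i j = A j.rev i.rev) ∧
      (Matrix.charpoly A).map (algebraMap ℝ ℂ) = ∏ i, (X - C (δ i)) := by
  intro A
  have hA : A = !![0, 1, 0, 0, 0;
         (s 2).re / 4, 0, 0, 1, 0;
         Real.sqrt ((6 * (s 5).re - 5 * (s 2).re * (s 3).re) / 30), 0, 0, 0, 0;
         (s 3).re / 6, 0, 0, 0, 1;
         (4 * (s 4).re - (s 2).re ^ 2) / 16, (s 3).re / 6,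
           Real.sqrt ((6 * (s 5).re - 5 * (s 2).re * (s 3).re) / 30), (s 2).re / 4, 0] := rfl
  -- the power sums are fixed by conjugation
  have hstar : ∀ k, (starRingEnd ℂ) (s k) = s k := by
    intro k
    have key := congrArg (fun m : Multiset ℂ => (Multiset.map (· ^ k) m).sum) hconj
    simp only [Multiset.map_coe, Multiset.sum_coe, List.map_ofFn, List.map_map] at key
    rw [hs k, map_sum]
    simp only [map_pow]
    calc ∑ i, (starRingEnd ℂ) (δ i) ^ k
        = (List.ofFn fun i => (starRingEnd ℂ) (δ i) ^ k).sum := by rw [List.sum_ofFn]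
      _ = (List.ofFn fun i => δ i ^ k).sum := key
      _ = ∑ i, δ i ^ k := by rw [List.sum_ofFn]
  have hcoe : ∀ k, ((s k).re : ℂ) = s k := by
    intro k
    exact Complex.conj_eq_iff_re.mp (hstar k)
  -- real inequalities
  have h2r : 0 ≤ (s 2).re := by
    rw [← hcoe 2, Complex.zero_le_real] at h2; exact h2
  have h3r : 0 ≤ (s 3).re := by
    rw [← hcoe 3, Complex.zero_le_real] at h3; exact h3
  have h4r : 0 ≤ 4 * (s 4).re - (s 2).re ^ 2 := by
    rw [← hcoe 4, ← hcoe 2] at h4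
    have : (4 * ((s 4).re : ℂ) - ((s 2).re : ℂ) ^ 2) = ((4 * (s 4).re - (s 2).re ^ 2 : ℝ) : ℂ) := by
      push_cast; ring
    rw [this, Complex.zero_le_real] at h4; exact h4
  have h5r : 0 ≤ 6 * (s 5).re - 5 * (s 2).re * (s 3).re := by
    rw [← hcoe 5, ← hcoe 2, ← hcoe 3] at h5
    have : (6 * ((s 5).re : ℂ) - 5 * ((s 2).re : ℂ) * ((s 3).re : ℂ))
        = ((6 * (s 5).re - 5 * (s 2).re * (s 3).re : ℝ) : ℂ) := by push_cast; ring
    rw [this, Complex.zero_le_real] at h5; exact h5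
  have h5r' : 0 ≤ (6 * (s 5).re - 5 * (s 2).re * (s 3).re) / 30 := by linarith
  refine ⟨?_, ?_, ?_⟩
  · -- nonnegativity
    intro i j
    fin_cases i <;> fin_cases j <;> simp [hA] <;>
      first
        | positivity
        | linarith [h2r, h3r, h4r]
  · -- persymmetry
    intro i j
    fin_cases i <;> fin_cases j <;> rfl
  · -- the characteristic polynomial
    have t1 : δ 0 + δ 1 + δ 2 + δ 3 + δ 4 = 0 := by
      have h := (hs 1).symm.trans h1
      simpa [Fin.sum_univ_five] using h
    have t2 : ((s 2).re : ℂ) = δ 0 ^ 2 + δ 1 ^ 2 + δ 2 ^ 2 + δ 3 ^ 2 + δ 4 ^ 2 := by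
      rw [hcoe 2, hs 2, Fin.sum_univ_five]
    have t3 : ((s 3).re : ℂ) = δ 0 ^ 3 + δ 1 ^ 3 + δ 2 ^ 3 + δ 3 ^ 3 + δ 4 ^ 3 := by
      rw [hcoe 3, hs 3, Fin.sum_univ_five]
    have t4 : ((s 4).re : ℂ) = δ 0 ^ 4 + δ 1 ^ 4 + δ 2 ^ 4 + δ 3 ^ 4 + δ 4 ^ 4 := by
      rw [hcoe 4, hs 4, Fin.sum_univ_five]
    have t5 : ((s 5).re : ℂ) = δ 0 ^ 5 + δ 1 ^ 5 + δ 2 ^ 5 + δ 3 ^ 5 + δ 4 ^ 5 := by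
      rw [hcoe 5, hs 5, Fin.sum_univ_five]
    set d0 := δ 0; set d1 := δ 1; set d2 := δ 2; set d3 := δ 3; set d4 := δ 4
    have hc3 : ((2 * ((s 2).re / 4) : ℝ) : ℂ)
        = -(d0*d1 + d0*d2 + d0*d3 + d0*d4 + d1*d2 + d1*d3 + d1*d4 + d2*d3 + d2*d4 + d3*d4) := by
      push_cast
      linear_combination (1/2 : ℂ) * t2 + ((d0+d1+d2+d3+d4)/2) * t1
    have hc2 : ((2 * ((s 3).re / 6) : ℝ) : ℂ)
        = d0*d1*d2 + d0*d1*d3 + d0*d1*d4 + d0*d2*d3 + d0*d2*d4 + d0*d3*d4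
          + d1*d2*d3 + d1*d2*d4 + d1*d3*d4 + d2*d3*d4 := by
      push_cast
      linear_combination (1/3 : ℂ) * t3
        - (((d0+d1+d2+d3+d4)^2 - 3*(d0^2+d1^2+d2^2+d3^2+d4^2))/6) * t1
    have hc1 : ((((s 2).re / 4) ^ 2 - (4 * (s 4).re - (s 2).re ^ 2) / 16 : ℝ) : ℂ)
        = d0*d1*d2*d3 + d0*d1*d2*d4 + d0*d1*d3*d4 + d0*d2*d3*d4 + d1*d2*d3*d4 := by
      push_cast
      linear_combination ((((s 2).re : ℂ) + (d0^2+d1^2+d2^2+d3^2+d4^2))/8) * t2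
        - (1/4 : ℂ) * t4
        - (((d0+d1+d2+d3+d4)^3 - 6*(d0+d1+d2+d3+d4)*(d0^2+d1^2+d2^2+d3^2+d4^2)
            + 8*(d0^3+d1^3+d2^3+d3^3+d4^3))/24) * t1
    have hc0 : (((6 * (s 5).re - 5 * (s 2).re * (s 3).re) / 30 : ℝ) : ℂ)
        = d0*d1*d2*d3*d4 := by
      push_cast
      linear_combination (1/5 : ℂ) * t5 - (((s 3).re : ℂ)/6) * t2
        - ((d0^2+d1^2+d2^2+d3^2+d4^2)/6) * t3
        - (((d0+d1+d2+d3+d4)^4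
            - 10*(d0+d1+d2+d3+d4)^2*(d0^2+d1^2+d2^2+d3^2+d4^2)
            + 15*(d0^2+d1^2+d2^2+d3^2+d4^2)^2
            + 20*(d0+d1+d2+d3+d4)*(d0^3+d1^3+d2^3+d3^3+d4^3)
            - 30*(d0^4+d1^4+d2^4+d3^4+d4^4))/120) * t1
    rw [hA, charpoly_eq', Fin.prod_univ_five]
    rw [Real.sq_sqrt h5r']
    simp only [Polynomial.map_sub, Polynomial.map_add, Polynomial.map_mul, Polynomial.map_pow,
      Polynomial.map_X, Polynomial.map_C, Complex.coe_algebraMap]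
    rw [hc3, hc2, hc1, hc0]
    have hC1 : (C d0 + C d1 + C d2 + C d3 + C d4 : ℂ[X]) = 0 := by
      rw [← map_add, ← map_add, ← map_add, ← map_add, t1, map_zero]
    simp only [map_add, _root_.map_mul, map_neg]
    linear_combination (X : ℂ[X])^4 * hC1
end

section
/- Let δ₁,…,δ₅ be complex numbers, closed under complex conjugation, with s₁ = 0, s₃ > 0, s₅ > 0, 5s₂s₃ − 6s₅ > 0 and 2s₄ − s₂² ≥ 0. Set a = 3s₅/(5s₃), c = √5·s₃/(3√s₅), d = (5s₂s₃−6s₅)/(10s₃) and b = (√3/6)·√((12s₅(5s₂s₃−6s₅)+25s₃²(2s₄−s₂²))/(s₅(5s₂s₃−6s₅))). Then the 5×5 real matrix C with rows (0,0,0,0,a), (b,0,0,1,0), (c,0,0,0,0), (0,d,0,0,0), (1,0,c,b,0) is entrywise nonnegative, persymmetric, and its characteristic polynomial over ℂ equals ∏ᵢ₌₁⁵(X−δᵢ). -/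
open Matrix Polynomial
open scoped ComplexOrder

set_option maxHeartbeats 1000000 in
private lemma charpoly_aux (a b c d : ℝ) :
    (Matrix.charpoly (!![0, 0, 0, 0, a;
         b, 0, 0, 1, 0;
         c, 0, 0, 0, 0;
         0, d, 0, 0, 0;
         1, 0, c, b, 0] : Matrix (Fin 5) (Fin 5) ℝ))
    = X^5 - C (a + d) * X^3 - C (a*c^2) * X^2 + C (a*d - a*b^2*d) * X + C (a*c^2*d) := by
  have hm : charmatrix (!![0, 0, 0, 0, a;
         b, 0, 0, 1, 0;
         c, 0, 0, 0, 0;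
         0, d, 0, 0, 0;
         1, 0, c, b, 0] : Matrix (Fin 5) (Fin 5) ℝ) =
      !![X, 0, 0, 0, -C a;
         -C b, X, 0, -1, 0;
         -C c, 0, X, 0, 0;
         0, -C d, 0, X, 0;
         -1, 0, -C c, -C b, X] := by
    apply Matrix.ext; intro i j
    fin_cases i <;> fin_cases j <;>
      simp [charmatrix_apply_eq, charmatrix_apply_ne, Matrix.vecHead, Matrix.vecTail]
  rw [Matrix.charpoly, hm]
  simp [Matrix.det_succ_row_zero, Fin.sum_univ_succ, Matrix.submatrix, Fin.zero_succAbove]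
  simp [Fin.succAbove, Fin.lt_def]
  ring

private lemma prod_aux (d0 d1 d2 d3 d4 : ℂ) (hS1 : d0+d1+d2+d3+d4 = 0) :
    X^5 - C (-(d0*d1 + d0*d2 + d0*d3 + d0*d4 + d1*d2 + d1*d3 + d1*d4 + d2*d3 + d2*d4 + d3*d4)) * X^3
    - C (d0*d1*d2 + d0*d1*d3 + d0*d1*d4 + d0*d2*d3 + d0*d2*d4 + d0*d3*d4 + d1*d2*d3 + d1*d2*d4 + d1*d3*d4 + d2*d3*d4) * X^2
    + C (d0*d1*d2*d3 + d0*d1*d2*d4 + d0*d1*d3*d4 + d0*d2*d3*d4 + d1*d2*d3*d4) * X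
    + C (-(d0*d1*d2*d3*d4))
    = (X - C d0) * (X - C d1) * (X - C d2) * (X - C d3) * (X - C d4) := by
  have h : (C d0 + C d1 + C d2 + C d3 + C d4 : ℂ[X]) = 0 := by
    rw [← map_add, ← map_add, ← map_add, ← map_add, hS1, map_zero]
  simp only [map_add, _root_.map_mul, map_neg]
  linear_combination (X^4 : ℂ[X]) * h

set_option maxHeartbeats 2000000 in
/-- Case 2(ii) of the main theorem: explicit persymmetric realization
when s₃ > 0, s₅ > 0, 5s₂s₃ - 6s₅ > 0 and 2s₄ - s₂² ≥ 0. -/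
theorem stmt_3 (δ : Fin 5 → ℂ) (s : ℕ → ℂ) (hs : ∀ k, s k = ∑ i, δ i ^ k)
    (hconj : Multiset.map (starRingEnd ℂ) (↑(List.ofFn δ) : Multiset ℂ)
      = (↑(List.ofFn δ) : Multiset ℂ))
    (h1 : s 1 = 0) (h3 : 0 < s 3) (h5 : 0 < s 5)
    (h53 : 0 < 5 * s 2 * s 3 - 6 * s 5) (h4 : 0 ≤ 2 * s 4 - (s 2) ^ 2)
    (a b c d : ℝ)
    (ha : a = 3 * (s 5).re / (5 * (s 3).re))
    (hb : b = Real.sqrt 3 / 6 *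
      Real.sqrt ((12 * (s 5).re * (5 * (s 2).re * (s 3).re - 6 * (s 5).re)
          + 25 * (s 3).re ^ 2 * (2 * (s 4).re - (s 2).re ^ 2))
        / ((s 5).re * (5 * (s 2).re * (s 3).re - 6 * (s 5).re))))
    (hc : c = Real.sqrt 5 * (s 3).re / (3 * Real.sqrt (s 5).re))
    (hd : d = (5 * (s 2).re * (s 3).re - 6 * (s 5).re) / (10 * (s 3).re)) :
    let Cmat : Matrix (Fin 5) (Fin 5) ℝ :=
      !![0, 0, 0, 0, a;
         b, 0, 0, 1, 0;
         c, 0, 0, 0, 0;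
         0, d, 0, 0, 0;
         1, 0, c, b, 0]
    (∀ i j, 0 ≤ Cmat i j) ∧ (∀ i j, Cmat i j = Cmat j.rev i.rev) ∧
      (Matrix.charpoly Cmat).map (algebraMap ℝ ℂ) = ∏ i, (X - C (δ i)) := by
  intro Cmat
  -- notation
  set P2 := (s 2).re with hP2def
  set P3 := (s 3).re with hP3def
  set P4 := (s 4).re with hP4def
  set P5 := (s 5).re with hP5def
  -- realness facts
  rw [Complex.lt_def] at h3 h5 h53
  rw [Complex.le_def] at h4
  obtain ⟨h3r, h3i⟩ := h3
  obtain ⟨h5r, h5i⟩ := h5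
  obtain ⟨h53r, h53i⟩ := h53
  obtain ⟨h4r, h4i⟩ := h4
  simp only [Complex.zero_re, Complex.zero_im] at h3r h3i h5r h5i h53r h53i h4r h4i
  replace h3i := h3i.symm
  replace h5i := h5i.symm
  simp only [pow_two, Complex.sub_re, Complex.sub_im, Complex.mul_re, Complex.mul_im,
    Complex.re_ofNat, Complex.im_ofNat, h3i, h5i, mul_zero, zero_mul, sub_zero, add_zero,
    zero_add, zero_sub, mul_one] at h53r h53i h4r h4i
  have him2 : (s 2).im = 0 := by
    have h0 : (s 2).im * P3 = 0 := by nlinarith [h53i]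
    rcases mul_eq_zero.1 h0 with h | h
    · exact h
    · nlinarith
  have him4 : (s 4).im = 0 := by nlinarith [h4i]
  have hD53 : 0 < 5*P2*P3 - 6*P5 := by nlinarith
  have hN4 : 0 ≤ 2*P4 - P2^2 := by nlinarith
  -- real algebra for the coefficients
  have hP3' : P3 ≠ 0 := ne_of_gt h3r
  have hP5' : P5 ≠ 0 := ne_of_gt h5r
  have hD' : P5 * (5*P2*P3 - 6*P5) ≠ 0 := by positivity
  have hc2 : c^2 = 5 * P3^2 / (9 * P5) := by
    rw [hc, div_pow, mul_pow, mul_pow, Real.sq_sqrt (by norm_num : (5:ℝ) ≥ 0).le,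
      Real.sq_sqrt h5r.le]
    ring
  have hb2 : b^2 = (12 * P5 * (5*P2*P3 - 6*P5) + 25 * P3^2 * (2*P4 - P2^2))
      / (12 * (P5 * (5*P2*P3 - 6*P5))) := by
    have harg : 0 ≤ (12 * P5 * (5*P2*P3 - 6*P5) + 25 * P3^2 * (2*P4 - P2^2))
        / (P5 * (5*P2*P3 - 6*P5)) := by positivity
    rw [hb, mul_pow, div_pow, Real.sq_sqrt (by norm_num : (0:ℝ) ≤ 3), Real.sq_sqrt harg]
    field_simp
    ring
  have A3 : a + d = P2/2 := by rw [ha, hd]; field_simp; ring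
  have A2 : a*c^2 = P3/3 := by rw [ha, hc2]; field_simp; ring
  have A1 : a*d - a*b^2*d = (P2^2 - 2*P4)/8 := by set D := 5*P2*P3 - 6*P5; rw [ha, hd, hb2]; field_simp; ring
  have A0 : a*c^2*d = (5*P2*P3 - 6*P5)/30 := by rw [ha, hc2, hd]; field_simp; ring
  have ha0 : 0 ≤ a := by rw [ha]; positivity
  have hb0 : 0 ≤ b := by rw [hb]; positivity
  have hc0 : 0 ≤ c := by rw [hc]; positivity
  have hd0 : 0 ≤ d := by rw [hd]; positivity
  refine ⟨?_, ?_, ?_⟩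
  · -- nonnegativity
    intro i j
    fin_cases i <;> fin_cases j <;>
      simp [Cmat, Matrix.cons_val_zero, Matrix.cons_val_one, Matrix.head_cons, Matrix.vecHead, Matrix.vecTail] <;>
      first | exact ha0 | exact hb0 | exact hc0 | exact hd0 | norm_num
  · -- persymmetry
    intro i j
    fin_cases i <;> fin_cases j <;> rfl
  · -- characteristic polynomial
    -- power sums in terms of the roots
    have hq2 : ((P2 : ℝ) : ℂ) = s 2 := Complex.ext (by simp [hP2def]) (by simp [him2])
    have hq3 : ((P3 : ℝ) : ℂ) = s 3 := Complex.ext (by simp [hP3def]) (by simp [h3i])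
    have hq4 : ((P4 : ℝ) : ℂ) = s 4 := Complex.ext (by simp [hP4def]) (by simp [him4])
    have hq5 : ((P5 : ℝ) : ℂ) = s 5 := Complex.ext (by simp [hP5def]) (by simp [h5i])
    have hS1 : δ 0 + δ 1 + δ 2 + δ 3 + δ 4 = 0 := by
      have t := (hs 1).symm.trans h1
      rw [Fin.sum_univ_five] at t
      simpa using t
    have hS2 : ((P2 : ℝ) : ℂ) = δ 0^2 + δ 1^2 + δ 2^2 + δ 3^2 + δ 4^2 := by
      rw [hq2, hs 2, Fin.sum_univ_five]
    have hS3 : ((P3 : ℝ) : ℂ) = δ 0^3 + δ 1^3 + δ 2^3 + δ 3^3 + δ 4^3 := by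
      rw [hq3, hs 3, Fin.sum_univ_five]
    have hS4 : ((P4 : ℝ) : ℂ) = δ 0^4 + δ 1^4 + δ 2^4 + δ 3^4 + δ 4^4 := by
      rw [hq4, hs 4, Fin.sum_univ_five]
    have hS5 : ((P5 : ℝ) : ℂ) = δ 0^5 + δ 1^5 + δ 2^5 + δ 3^5 + δ 4^5 := by
      rw [hq5, hs 5, Fin.sum_univ_five]
    set d0 := δ 0
    set d1 := δ 1
    set d2 := δ 2
    set d3 := δ 3
    set d4 := δ 4
    have E2 : ((a + d : ℝ) : ℂ)
        = -(d0*d1 + d0*d2 + d0*d3 + d0*d4 + d1*d2 + d1*d3 + d1*d4 + d2*d3 + d2*d4 + d3*d4) := by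
      rw [A3]; push_cast
      linear_combination hS2/2 + ((d0+d1+d2+d3+d4)/2) * hS1
    have E3 : ((a*c^2 : ℝ) : ℂ)
        = d0*d1*d2 + d0*d1*d3 + d0*d1*d4 + d0*d2*d3 + d0*d2*d4 + d0*d3*d4
          + d1*d2*d3 + d1*d2*d4 + d1*d3*d4 + d2*d3*d4 := by
      rw [A2]; push_cast
      linear_combination hS3/3 - (((d0+d1+d2+d3+d4)^2 - 3*(d0^2+d1^2+d2^2+d3^2+d4^2))/6) * hS1
    have E1 : ((a*d - a*b^2*d : ℝ) : ℂ)
        = d0*d1*d2*d3 + d0*d1*d2*d4 + d0*d1*d3*d4 + d0*d2*d3*d4 + d1*d2*d3*d4 := by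
      rw [A1]; push_cast
      linear_combination ((((P2:ℝ):ℂ) + (d0^2+d1^2+d2^2+d3^2+d4^2))/8) * hS2 - hS4/4 -
        (((d0+d1+d2+d3+d4)^3 - 6*(d0+d1+d2+d3+d4)*(d0^2+d1^2+d2^2+d3^2+d4^2)
          + 8*(d0^3+d1^3+d2^3+d3^3+d4^3))/24) * hS1
    have E0 : ((a*c^2*d : ℝ) : ℂ) = -(d0*d1*d2*d3*d4) := by
      rw [A0]; push_cast
      linear_combination ((((P3:ℝ):ℂ))*5/30) * hS2 + (5*(d0^2+d1^2+d2^2+d3^2+d4^2)/30) * hS3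
        - hS5/5 +
        (((d0+d1+d2+d3+d4)^4 - 10*(d0+d1+d2+d3+d4)^2*(d0^2+d1^2+d2^2+d3^2+d4^2)
          + 15*(d0^2+d1^2+d2^2+d3^2+d4^2)^2 + 20*(d0+d1+d2+d3+d4)*(d0^3+d1^3+d2^3+d3^3+d4^3)
          - 30*(d0^4+d1^4+d2^4+d3^4+d4^4))/120) * hS1
    show (Matrix.charpoly (!![0, 0, 0, 0, a;
         b, 0, 0, 1, 0;
         c, 0, 0, 0, 0;
         0, d, 0, 0, 0;
         1, 0, c, b, 0] : Matrix (Fin 5) (Fin 5) ℝ)).map (algebraMap ℝ ℂ) = _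
    rw [charpoly_aux, Fin.prod_univ_five]
    simp only [Polynomial.map_add, Polynomial.map_sub, Polynomial.map_mul, Polynomial.map_pow,
      Polynomial.map_X, Polynomial.map_C, Complex.coe_algebraMap]
    rw [E2, E3, E1, E0]
    exact prod_aux d0 d1 d2 d3 d4 hS1
end

section
/- Let δ be a positive real number and let δ₁,δ₂,δ₃,δ₄ be complex numbers, each with real part ≤ 0, such that the list (δ₁,δ₂,δ₃,δ₄) is closed under complex conjugation. Write sₖ for the k-th power sum of the five numbers δ,δ₁,δ₂,δ₃,δ₄. If s₁ ≥ 0 and s₂ − s₁² ≥ 0, then the list (δ,δ₁,δ₂,δ₃,δ₄) is persymmetrically realizable: there exists a 5×5 entrywise nonnegative persymmetric real matrix whose characteristic polynomial over ℂ equals (X−δ)∏ᵢ₌₁⁴(X−δᵢ). -/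
open Matrix Polynomial
open scoped ComplexOrder

set_option maxHeartbeats 1000000

private lemma det_five {R : Type*} [CommRing R] (t u₁ u₂ u₃ u₄ u₅ : R) :
    Matrix.det !![t - u₁, -u₂, -u₃, -u₄, -u₅;
       -1, t, 0, 0, -u₄;
       0, -1, t, 0, -u₃;
       0, 0, -1, t, -u₂;
       0, 0, 0, -1, t - u₁] =
    t^5 - 2*u₁*t^4 + (u₁^2-2*u₂)*t^3 + (2*u₁*u₂-2*u₃)*t^2 + (u₂^2+2*u₁*u₃-2*u₄)*t
      + (2*u₂*u₃ + 2*u₁*u₄ - u₅) := by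
  simp [Matrix.det_succ_column_zero, Fin.sum_univ_succ, Fin.succAbove]
  ring

private lemma charpoly_fin5 (x₁ x₂ x₃ x₄ x₅ : ℝ) :
    Matrix.charpoly !![x₁,x₂,x₃,x₄,x₅; (1:ℝ),0,0,0,x₄; 0,1,0,0,x₃; 0,0,1,0,x₂; 0,0,0,1,x₁] =
    X^5 - C (2*x₁) * X^4 + C (x₁^2 - 2*x₂) * X^3 + C (2*x₁*x₂ - 2*x₃) * X^2
      + C (x₂^2 + 2*x₁*x₃ - 2*x₄) * X + C (2*x₂*x₃ + 2*x₁*x₄ - x₅) := by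
  have hc : charmatrix !![x₁,x₂,x₃,x₄,x₅; (1:ℝ),0,0,0,x₄; 0,1,0,0,x₃; 0,0,1,0,x₂; 0,0,0,1,x₁]
      = !![X - C x₁, -C x₂, -C x₃, -C x₄, -C x₅;
           -1, X, 0, 0, -C x₄;
           0, -1, X, 0, -C x₃;
           0, 0, -1, X, -C x₂;
           0, 0, 0, -1, X - C x₁] := by
    ext i j
    fin_cases i <;> fin_cases j <;>
      simp [charmatrix_apply, Matrix.one_apply, Matrix.vecHead, Matrix.vecTail]
  rw [Matrix.charpoly, hc, det_five]
  simp only [_root_.map_mul, _root_.map_add, _root_.map_sub, map_pow, map_ofNat]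

private lemma quad_re (z w : ℂ)
    (h : ((starRingEnd ℂ) z = z ∧ (starRingEnd ℂ) w = w) ∨ (starRingEnd ℂ) z = w)
    (hz : z.re ≤ 0) (hw : w.re ≤ 0) :
    ∃ b c : ℝ, 0 ≤ b ∧ 0 ≤ c ∧ z + w = -(b:ℂ) ∧ z * w = (c:ℂ) := by
  rcases h with ⟨h1, h2⟩ | h1
  · obtain ⟨x, rfl⟩ : ∃ x : ℝ, z = (x:ℂ) := ⟨z.re, (Complex.conj_eq_iff_re.mp h1).symm⟩
    obtain ⟨y, rfl⟩ : ∃ y : ℝ, w = (y:ℂ) := ⟨w.re, (Complex.conj_eq_iff_re.mp h2).symm⟩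
    simp only [Complex.ofReal_re] at hz hw
    refine ⟨-(x + y), x * y, by nlinarith, by nlinarith, ?_, ?_⟩ <;> push_cast <;> ring
  · obtain rfl : w = (starRingEnd ℂ) z := h1.symm
    refine ⟨-(2 * z.re), Complex.normSq z, by nlinarith, Complex.normSq_nonneg z, ?_, ?_⟩
    · rw [Complex.add_conj]; push_cast; ring
    · rw [Complex.mul_conj]

private lemma pair2 (z w : ℂ)
    (h : ((starRingEnd ℂ) z) ::ₘ {((starRingEnd ℂ) w)} = z ::ₘ ({w} : Multiset ℂ)) :
    ((starRingEnd ℂ) z = z ∧ (starRingEnd ℂ) w = w) ∨ (starRingEnd ℂ) z = w := by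
  have hm : (starRingEnd ℂ) z ∈ (z ::ₘ {w} : Multiset ℂ) := by
    rw [← h]; exact Multiset.mem_cons_self _ _
  rcases Multiset.mem_cons.mp hm with hz | hw
  · rw [hz] at h
    exact Or.inl ⟨hz, by simpa using (Multiset.cons_inj_right z).mp h⟩
  · exact Or.inr (by simpa using hw)

private lemma starConjInv {x y : ℂ} (e : (starRingEnd ℂ) x = y) : (starRingEnd ℂ) y = x := by
  rw [← e, Complex.conj_conj]

private lemma pair4 (d : Fin 4 → ℂ)
    (h : ((starRingEnd ℂ) (d 0)) ::ₘ ((starRingEnd ℂ) (d 1)) ::ₘ ((starRingEnd ℂ) (d 2)) ::ₘ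
      {((starRingEnd ℂ) (d 3))} = (d 0) ::ₘ (d 1) ::ₘ (d 2) ::ₘ ({d 3} : Multiset ℂ)) :
    ∃ z₁ w₁ z₂ w₂ : ℂ,
      (((starRingEnd ℂ) z₁ = z₁ ∧ (starRingEnd ℂ) w₁ = w₁) ∨ (starRingEnd ℂ) z₁ = w₁) ∧
      (((starRingEnd ℂ) z₂ = z₂ ∧ (starRingEnd ℂ) w₂ = w₂) ∨ (starRingEnd ℂ) z₂ = w₂) ∧
      z₁ ::ₘ w₁ ::ₘ z₂ ::ₘ ({w₂} : Multiset ℂ)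
        = (d 0) ::ₘ (d 1) ::ₘ (d 2) ::ₘ ({d 3} : Multiset ℂ) := by
  have hm : (starRingEnd ℂ) (d 0) ∈ ((d 0) ::ₘ (d 1) ::ₘ (d 2) ::ₘ ({d 3}:Multiset ℂ)) := by
    rw [← h]; exact Multiset.mem_cons_self _ _
  simp only [Multiset.mem_cons, Multiset.mem_singleton] at hm
  rcases hm with e0 | e0 | e0 | e0
  · rw [e0] at h
    have h' := (Multiset.cons_inj_right _).mp h
    have hm1 : (starRingEnd ℂ) (d 1) ∈ ((d 1) ::ₘ (d 2) ::ₘ ({d 3}:Multiset ℂ)) := by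
      rw [← h']; exact Multiset.mem_cons_self _ _
    simp only [Multiset.mem_cons, Multiset.mem_singleton] at hm1
    rcases hm1 with e1 | e1 | e1
    · rw [e1] at h'
      exact ⟨d 0, d 1, d 2, d 3, Or.inl ⟨e0, e1⟩,
        pair2 _ _ ((Multiset.cons_inj_right _).mp h'), rfl⟩
    · have e1' := starConjInv e1
      rw [e1, e1'] at h'
      have pl : (d 2) ::ₘ (d 1) ::ₘ {(starRingEnd ℂ) (d 3)} =
          (d 1) ::ₘ (d 2) ::ₘ {(starRingEnd ℂ) (d 3)} := Multiset.cons_swap _ _ _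
      rw [pl] at h'
      have e3 : (starRingEnd ℂ) (d 3) = d 3 := by
        simpa using (Multiset.cons_inj_right _).mp ((Multiset.cons_inj_right _).mp h')
      refine ⟨d 1, d 2, d 0, d 3, Or.inr e1, Or.inl ⟨e0, e3⟩, ?_⟩
      simp only [← Multiset.singleton_add]; abel
    · have e1' := starConjInv e1
      rw [e1, e1'] at h'
      have pl : (d 3) ::ₘ ((starRingEnd ℂ) (d 2)) ::ₘ {d 1} =
          (d 1) ::ₘ (d 3) ::ₘ {(starRingEnd ℂ) (d 2)} := by
        simp only [← Multiset.singleton_add]; abel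
      have pr : (d 1) ::ₘ (d 2) ::ₘ ({d 3} : Multiset ℂ) = (d 1) ::ₘ (d 3) ::ₘ {d 2} := by
        simp only [← Multiset.singleton_add]; abel
      rw [pl, pr] at h'
      have e2 : (starRingEnd ℂ) (d 2) = d 2 := by
        simpa using (Multiset.cons_inj_right _).mp ((Multiset.cons_inj_right _).mp h')
      refine ⟨d 1, d 3, d 0, d 2, Or.inr e1, Or.inl ⟨e0, e2⟩, ?_⟩
      simp only [← Multiset.singleton_add]; abel
  · have e0' := starConjInv e0
    rw [e0, e0', Multiset.cons_swap] at h
    have h' := (Multiset.cons_inj_right _).mp ((Multiset.cons_inj_right _).mp h)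
    exact ⟨d 0, d 1, d 2, d 3, Or.inr e0, pair2 _ _ h', rfl⟩
  · have e0' := starConjInv e0
    rw [e0, e0'] at h
    have pl : (d 2) ::ₘ ((starRingEnd ℂ) (d 1)) ::ₘ (d 0) ::ₘ {(starRingEnd ℂ) (d 3)} =
        (d 0) ::ₘ (d 2) ::ₘ ((starRingEnd ℂ) (d 1)) ::ₘ {(starRingEnd ℂ) (d 3)} := by
      simp only [← Multiset.singleton_add]; abel
    have pr : (d 0) ::ₘ (d 1) ::ₘ (d 2) ::ₘ ({d 3} : Multiset ℂ) =
        (d 0) ::ₘ (d 2) ::ₘ (d 1) ::ₘ {d 3} := by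
      simp only [← Multiset.singleton_add]; abel
    rw [pl, pr] at h
    have h' := (Multiset.cons_inj_right _).mp ((Multiset.cons_inj_right _).mp h)
    refine ⟨d 0, d 2, d 1, d 3, Or.inr e0, pair2 _ _ h', ?_⟩
    simp only [← Multiset.singleton_add]; abel
  · have e0' := starConjInv e0
    rw [e0, e0'] at h
    have pl : (d 3) ::ₘ ((starRingEnd ℂ) (d 1)) ::ₘ ((starRingEnd ℂ) (d 2)) ::ₘ {d 0} =
        (d 0) ::ₘ (d 3) ::ₘ ((starRingEnd ℂ) (d 1)) ::ₘ {(starRingEnd ℂ) (d 2)} := by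
      simp only [← Multiset.singleton_add]; abel
    have pr : (d 0) ::ₘ (d 1) ::ₘ (d 2) ::ₘ ({d 3} : Multiset ℂ) =
        (d 0) ::ₘ (d 3) ::ₘ (d 1) ::ₘ {d 2} := by
      simp only [← Multiset.singleton_add]; abel
    rw [pl, pr] at h
    have h' := (Multiset.cons_inj_right _).mp ((Multiset.cons_inj_right _).mp h)
    refine ⟨d 0, d 3, d 1, d 2, Or.inr e0, pair2 _ _ h', ?_⟩
    simp only [← Multiset.singleton_add]; abel

private lemma ineq_cc (δ b₁ c₁ b₂ c₂ : ℝ) (hb₁ : 0 ≤ b₁) (hc₁ : 0 ≤ c₁) (hb₂ : 0 ≤ b₂)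
    (hc₂ : 0 ≤ c₂) (ha : 0 ≤ δ - (b₁ + b₂)) :
    0 ≤ δ*(c₁+c₂+b₁*b₂) - (b₁*c₂+b₂*c₁) := by
  have hδ : 0 ≤ δ := by linarith
  nlinarith [mul_nonneg hc₁ (by linarith : 0 ≤ δ - b₂), mul_nonneg hc₂ (by linarith : 0 ≤ δ - b₁),
    mul_nonneg (mul_nonneg hδ hb₁) hb₂]

private lemma ineq_dd (δ b₁ c₁ b₂ c₂ : ℝ) (hb₁ : 0 ≤ b₁) (hc₁ : 0 ≤ c₁) (hb₂ : 0 ≤ b₂)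
    (hc₂ : 0 ≤ c₂) (ha : 0 ≤ δ - (b₁ + b₂)) (hbb : 0 ≤ δ*(b₁+b₂) - (c₁+c₂+b₁*b₂)) :
    0 ≤ δ*(b₁*c₂+b₂*c₁) - c₁*c₂ := by
  have hδ : 0 ≤ δ := by linarith
  rcases le_or_gt c₁ (δ*b₁) with h | h
  · nlinarith [mul_nonneg hc₂ (by linarith : 0 ≤ δ*b₁ - c₁), mul_nonneg (mul_nonneg hδ hb₂) hc₁]
  · have h2 : 0 ≤ δ*b₂ - c₂ := by nlinarith [mul_nonneg hb₁ hb₂]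
    nlinarith [mul_nonneg hc₁ h2, mul_nonneg (mul_nonneg hδ hb₁) hc₂]

/-- A list of a positive Perron root together with four complex numbers
with nonpositive real parts, closed under conjugation, with s₁ ≥ 0 and s₂ - s₁² ≥ 0,
is persymmetrically realizable. -/
theorem stmt_5 (δ : ℝ) (hδ : 0 < δ) (d : Fin 4 → ℂ) (hre : ∀ i, (d i).re ≤ 0)
    (hconj : Multiset.map (starRingEnd ℂ) (↑(List.ofFn d) : Multiset ℂ)
      = (↑(List.ofFn d) : Multiset ℂ))
    (s : ℕ → ℂ) (hs : ∀ k, s k = (δ : ℂ) ^ k + ∑ i, d i ^ k)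
    (h1 : 0 ≤ s 1) (h2 : 0 ≤ s 2 - (s 1) ^ 2) :
    ∃ A : Matrix (Fin 5) (Fin 5) ℝ, (∀ i j, 0 ≤ A i j) ∧
      (∀ i j, A i j = A j.rev i.rev) ∧
      (Matrix.charpoly A).map (algebraMap ℝ ℂ) =
        (X - C (δ : ℂ)) * ∏ i, (X - C (d i)) := by
  have h4 : ((starRingEnd ℂ) (d 0)) ::ₘ ((starRingEnd ℂ) (d 1)) ::ₘ ((starRingEnd ℂ) (d 2)) ::ₘ
      {((starRingEnd ℂ) (d 3))} = (d 0) ::ₘ (d 1) ::ₘ (d 2) ::ₘ ({d 3} : Multiset ℂ) := by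
    simpa [List.ofFn_succ, ← Multiset.cons_coe] using hconj
  obtain ⟨z₁, w₁, z₂, w₂, p1, p2, meq⟩ := pair4 d h4
  have hmem : ∀ x ∈ (z₁ ::ₘ w₁ ::ₘ z₂ ::ₘ ({w₂} : Multiset ℂ)), x.re ≤ 0 := by
    rw [meq]
    intro x hx
    simp only [Multiset.mem_cons, Multiset.mem_singleton] at hx
    rcases hx with rfl | rfl | rfl | rfl
    exacts [hre 0, hre 1, hre 2, hre 3]
  obtain ⟨b₁, c₁, hb₁, hc₁, hsum1, hprod1⟩ :=
    quad_re z₁ w₁ p1 (hmem z₁ (by simp)) (hmem w₁ (by simp))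
  obtain ⟨b₂, c₂, hb₂, hc₂, hsum2, hprod2⟩ :=
    quad_re z₂ w₂ p2 (hmem z₂ (by simp)) (hmem w₂ (by simp))
  have S1 : z₁ + w₁ + z₂ + w₂ = d 0 + d 1 + d 2 + d 3 := by
    have := congrArg Multiset.sum meq
    simp only [Multiset.sum_cons, Multiset.sum_singleton] at this
    linear_combination this
  have S2 : z₁^2 + w₁^2 + z₂^2 + w₂^2 = d 0^2 + d 1^2 + d 2^2 + d 3^2 := by
    have := congrArg (fun s : Multiset ℂ => (s.map (fun z => z^2)).sum) meq
    simp only [Multiset.map_cons, Multiset.map_singleton, Multiset.sum_cons,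
      Multiset.sum_singleton] at this
    linear_combination this
  have P : (∏ i, (X - C (d i)) : ℂ[X]) =
      (X - C z₁) * (X - C w₁) * ((X - C z₂) * (X - C w₂)) := by
    have := congrArg (fun s : Multiset ℂ => (s.map (fun z => (X:ℂ[X]) - C z)).prod) meq
    simp only [Multiset.map_cons, Multiset.map_singleton, Multiset.prod_cons,
      Multiset.prod_singleton] at this
    rw [Fin.prod_univ_four]
    linear_combination -this
  have hs1 : s 1 = ((δ - (b₁ + b₂) : ℝ) : ℂ) := by
    rw [hs 1]
    simp only [pow_one, Fin.sum_univ_four]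
    push_cast
    linear_combination hsum1 + hsum2 - S1
  have ha : 0 ≤ δ - (b₁ + b₂) := by
    rw [hs1] at h1
    exact Complex.zero_le_real.mp h1
  have t1 : z₁^2 + w₁^2 = (b₁:ℂ)^2 - 2*(c₁:ℂ) := by
    linear_combination (z₁ + w₁ - (b₁:ℂ)) * hsum1 - 2 * hprod1
  have t2 : z₂^2 + w₂^2 = (b₂:ℂ)^2 - 2*(c₂:ℂ) := by
    linear_combination (z₂ + w₂ - (b₂:ℂ)) * hsum2 - 2 * hprod2
  have hs2 : s 2 - (s 1)^2 = ((2*(δ*(b₁+b₂) - (c₁+c₂+b₁*b₂)) : ℝ) : ℂ) := by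
    rw [hs 2, hs1]
    simp only [Fin.sum_univ_four]
    push_cast
    linear_combination t1 + t2 - S2
  have hbb : 0 ≤ δ*(b₁+b₂) - (c₁+c₂+b₁*b₂) := by
    rw [hs2] at h2
    have := Complex.zero_le_real.mp h2
    linarith
  have hcc := ineq_cc δ b₁ c₁ b₂ c₂ hb₁ hc₁ hb₂ hc₂ ha
  have hdd := ineq_dd δ b₁ c₁ b₂ c₂ hb₁ hc₁ hb₂ hc₂ ha hbb
  have hee : 0 ≤ δ*(c₁*c₂) := mul_nonneg (le_of_lt hδ) (mul_nonneg hc₁ hc₂)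
  obtain ⟨x₁, hx1d⟩ : ∃ x : ℝ, x = (δ - (b₁+b₂))/2 := ⟨_, rfl⟩
  obtain ⟨x₂, hx2d⟩ : ∃ x : ℝ, x = ((δ*(b₁+b₂) - (c₁+c₂+b₁*b₂)) + x₁^2)/2 := ⟨_, rfl⟩
  obtain ⟨x₃, hx3d⟩ : ∃ x : ℝ, x = ((δ*(c₁+c₂+b₁*b₂) - (b₁*c₂+b₂*c₁)) + 2*x₁*x₂)/2 := ⟨_, rfl⟩
  obtain ⟨x₄, hx4d⟩ : ∃ x : ℝ,
      x = ((δ*(b₁*c₂+b₂*c₁) - c₁*c₂) + x₂^2 + 2*x₁*x₃)/2 := ⟨_, rfl⟩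
  obtain ⟨x₅, hx5d⟩ : ∃ x : ℝ, x = δ*(c₁*c₂) + 2*x₁*x₄ + 2*x₂*x₃ := ⟨_, rfl⟩
  have hx1 : 0 ≤ x₁ := by rw [hx1d]; linarith
  have hx2 : 0 ≤ x₂ := by rw [hx2d]; nlinarith [sq_nonneg x₁]
  have hx3 : 0 ≤ x₃ := by rw [hx3d]; nlinarith [mul_nonneg hx1 hx2]
  have hx4 : 0 ≤ x₄ := by rw [hx4d]; nlinarith [sq_nonneg x₂, mul_nonneg hx1 hx3]
  have hx5 : 0 ≤ x₅ := by rw [hx5d]; nlinarith [mul_nonneg hx1 hx4, mul_nonneg hx2 hx3]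
  have f1 : 2*x₁ = δ - (b₁+b₂) := by rw [hx1d]; ring
  have f2 : 2*x₂ - x₁^2 = δ*(b₁+b₂) - (c₁+c₂+b₁*b₂) := by rw [hx2d]; ring
  have f3 : 2*x₃ - 2*x₁*x₂ = δ*(c₁+c₂+b₁*b₂) - (b₁*c₂+b₂*c₁) := by rw [hx3d]; ring
  have f4 : 2*x₄ - x₂^2 - 2*x₁*x₃ = δ*(b₁*c₂+b₂*c₁) - c₁*c₂ := by rw [hx4d]; ring
  have f5 : x₅ - 2*x₁*x₄ - 2*x₂*x₃ = δ*(c₁*c₂) := by rw [hx5d]; ring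
  refine ⟨!![x₁,x₂,x₃,x₄,x₅; (1:ℝ),0,0,0,x₄; 0,1,0,0,x₃; 0,0,1,0,x₂; 0,0,0,1,x₁],
    ?_, ?_, ?_⟩
  · intro i j
    fin_cases i <;> fin_cases j <;>
      simp [Matrix.vecHead, Matrix.vecTail] <;>
      first | assumption | norm_num
  · intro i j
    fin_cases i <;> fin_cases j <;> rfl
  · have key : Matrix.charpoly
        !![x₁,x₂,x₃,x₄,x₅; (1:ℝ),0,0,0,x₄; 0,1,0,0,x₃; 0,0,1,0,x₂; 0,0,0,1,x₁] =
        (X - C δ) * ((X^2 + C b₁ * X + C c₁) * (X^2 + C b₂ * X + C c₂)) := by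
      rw [charpoly_fin5]
      have g1 := congrArg (fun r : ℝ => (C r : ℝ[X])) f1
      have g2 := congrArg (fun r : ℝ => (C r : ℝ[X])) f2
      have g3 := congrArg (fun r : ℝ => (C r : ℝ[X])) f3
      have g4 := congrArg (fun r : ℝ => (C r : ℝ[X])) f4
      have g5 := congrArg (fun r : ℝ => (C r : ℝ[X])) f5
      simp only [_root_.map_mul, _root_.map_add, _root_.map_sub, map_pow, map_ofNat] at g1 g2 g3 g4 g5 ⊢
      linear_combination (-(X:ℝ[X])^4) * g1 - (X:ℝ[X])^3 * g2 - (X:ℝ[X])^2 * g3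
        - (X:ℝ[X]) * g4 - g5
    rw [key]
    simp only [Polynomial.map_mul, Polynomial.map_sub, Polynomial.map_add, Polynomial.map_pow,
      Polynomial.map_X, Polynomial.map_C, Complex.coe_algebraMap]
    rw [P]
    have e1 : C z₁ + C w₁ = -C ((b₁:ℂ)) := by rw [← C_add, hsum1, map_neg]
    have e2 : (C z₁ : ℂ[X]) * C w₁ = C ((c₁:ℂ)) := by rw [← C_mul, hprod1]
    have e3 : C z₂ + C w₂ = -C ((b₂:ℂ)) := by rw [← C_add, hsum2, map_neg]
    have e4 : (C z₂ : ℂ[X]) * C w₂ = C ((c₂:ℂ)) := by rw [← C_mul, hprod2]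
    have q1 : ((X:ℂ[X]) - C z₁) * (X - C w₁) = X^2 + C ((b₁:ℂ)) * X + C ((c₁:ℂ)) := by
      linear_combination (-(X:ℂ[X])) * e1 + e2
    have q2 : ((X:ℂ[X]) - C z₂) * (X - C w₂) = X^2 + C ((b₂:ℂ)) * X + C ((c₂:ℂ)) := by
      linear_combination (-(X:ℂ[X])) * e3 + e4
    rw [q1, q2]
end

section
/- Let δ be a positive real number and let δ₁,δ₂,δ₃,δ₄ be complex numbers, each with real part ≤ 0, such that the list (δ₁,δ₂,δ₃,δ₄) is closed under complex conjugation. Write sₖ for the k-th power sum of the five numbers δ,δ₁,δ₂,δ₃,δ₄, and assume s₁ = 0 and s₂ ≥ 0. Then there exist nonnegative reals p,q,r,s such that the Toeplitz (hence persymmetric) matrix with rows (0,1,0,0,0), (p,0,1,0,0), (q,p,0,1,0), (r,q,p,0,1), (s,r,q,p,0) is entrywise nonnegative and has characteristic polynomial (X−δ)∏ᵢ₌₁⁴(X−δᵢ) over ℂ; in particular the list admits a nonnegative Toeplitz realization. -/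
open Matrix Polynomial
open scoped ComplexOrder

local notation "cj" => starRingEnd ℂ

set_option maxHeartbeats 1000000 in
lemma charpoly_toeplitz_aux9 (p q r s : ℝ) :
    (Matrix.charpoly (!![0, 1, 0, 0, 0;
                         p, 0, 1, 0, 0;
                         q, p, 0, 1, 0;
                         r, q, p, 0, 1;
                         s, r, q, p, 0] : Matrix (Fin 5) (Fin 5) ℝ))
    = X^5 - C (4*p) * X^3 - C (3*q) * X^2 + C (3*p^2 - 2*r) * X + C (2*p*q - s) := by
  have h : charmatrix (!![0, 1, 0, 0, 0;
                         p, 0, 1, 0, 0;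
                         q, p, 0, 1, 0;
                         r, q, p, 0, 1;
                         s, r, q, p, 0] : Matrix (Fin 5) (Fin 5) ℝ)
      = !![X, -1, 0, 0, 0;
           -C p, X, -1, 0, 0;
           -C q, -C p, X, -1, 0;
           -C r, -C q, -C p, X, -1;
           -C s, -C r, -C q, -C p, X] := by
    ext i j
    fin_cases i <;> fin_cases j <;>
      simp [charmatrix_apply_eq, charmatrix_apply_ne]
  rw [Matrix.charpoly, h]
  simp [Matrix.det_succ_row_zero, Fin.sum_univ_succ, Fin.succAbove, map_ofNat]
  ring

lemma pair_bc_aux9 (u v : ℂ) (hu : u.re ≤ 0) (hv : v.re ≤ 0)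
    (h : cj u = v ∨ (u.im = 0 ∧ v.im = 0)) :
    ∃ b c : ℝ, 0 ≤ b ∧ 0 ≤ c ∧ u + v = -(b : ℂ) ∧ u * v = (c : ℂ) := by
  rcases h with h | ⟨h1, h2⟩
  · refine ⟨-2 * u.re, Complex.normSq u, by linarith, Complex.normSq_nonneg u, ?_, ?_⟩
    · rw [← h]
      apply Complex.ext <;> simp <;> ring
    · rw [← h, Complex.mul_conj]
  · refine ⟨-(u.re + v.re), u.re * v.re, by linarith, by nlinarith, ?_, ?_⟩
    · apply Complex.ext <;> simp [h1, h2]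
    · apply Complex.ext <;> simp [Complex.mul_re, Complex.mul_im, h1, h2]

lemma pair_closed_aux9 {x y : ℂ}
    (h : (cj x ::ₘ cj y ::ₘ (0 : Multiset ℂ)) = x ::ₘ y ::ₘ 0) :
    cj x = y ∨ (x.im = 0 ∧ y.im = 0) := by
  have hm : cj x ∈ (x ::ₘ y ::ₘ (0 : Multiset ℂ)) := by rw [← h]; simp
  simp only [Multiset.mem_cons, Multiset.notMem_zero, or_false] at hm
  rcases hm with hx | hx
  · right
    refine ⟨Complex.conj_eq_iff_im.mp hx, ?_⟩
    rw [hx, Multiset.cons_inj_right] at h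
    exact Complex.conj_eq_iff_im.mp (by simpa using h)
  · left; exact hx

lemma quad_struct_aux9 (d : Fin 4 → ℂ)
    (hconj : Multiset.map (starRingEnd ℂ) (↑(List.ofFn d) : Multiset ℂ)
      = (↑(List.ofFn d) : Multiset ℂ)) :
    ∃ u v w z : ℂ,
      (∃ i, u = d i) ∧ (∃ i, v = d i) ∧ (∃ i, w = d i) ∧ (∃ i, z = d i) ∧
      d 0 + d 1 + (d 2 + d 3) = u + v + (w + z) ∧
      d 0 ^ 2 + d 1 ^ 2 + (d 2 ^ 2 + d 3 ^ 2) = u ^ 2 + v ^ 2 + (w ^ 2 + z ^ 2) ∧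
      (X - C (d 0)) * (X - C (d 1)) * ((X - C (d 2)) * (X - C (d 3)))
        = (X - C u) * (X - C v) * ((X - C w) * (X - C z)) ∧
      (cj u = v ∨ (u.im = 0 ∧ v.im = 0)) ∧
      (cj w = z ∨ (w.im = 0 ∧ z.im = 0)) := by
  have hl : (↑(List.ofFn d) : Multiset ℂ) = d 0 ::ₘ d 1 ::ₘ d 2 ::ₘ d 3 ::ₘ 0 := by
    simp [List.ofFn_succ]; rfl
  rw [hl] at hconj
  simp only [Multiset.map_cons, Multiset.map_zero] at hconj
  have hm0 : cj (d 0) ∈ (d 0 ::ₘ d 1 ::ₘ d 2 ::ₘ d 3 ::ₘ (0:Multiset ℂ)) := by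
    rw [← hconj]; simp
  simp only [Multiset.mem_cons, Multiset.notMem_zero, or_false] at hm0
  rcases hm0 with h0 | h0 | h0 | h0
  · -- d 0 real
    have h0im : (d 0).im = 0 := Complex.conj_eq_iff_im.mp h0
    rw [h0, Multiset.cons_inj_right] at hconj
    have hm1 : cj (d 1) ∈ (d 1 ::ₘ d 2 ::ₘ d 3 ::ₘ (0:Multiset ℂ)) := by
      rw [← hconj]; simp
    simp only [Multiset.mem_cons, Multiset.notMem_zero, or_false] at hm1
    rcases hm1 with h1 | h1 | h1
    · rw [h1, Multiset.cons_inj_right] at hconj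
      exact ⟨d 0, d 1, d 2, d 3, ⟨0, rfl⟩, ⟨1, rfl⟩, ⟨2, rfl⟩, ⟨3, rfl⟩,
        by ring, by ring, by ring, Or.inr ⟨h0im, Complex.conj_eq_iff_im.mp h1⟩,
        pair_closed_aux9 hconj⟩
    · have h2 : cj (d 2) = d 1 := by rw [← h1, Complex.conj_conj]
      rw [h1, h2, Multiset.cons_swap, Multiset.cons_inj_right, Multiset.cons_inj_right] at hconj
      have h3 : cj (d 3) = d 3 := by simpa using hconj
      exact ⟨d 1, d 2, d 0, d 3, ⟨1, rfl⟩, ⟨2, rfl⟩, ⟨0, rfl⟩, ⟨3, rfl⟩,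
        by ring, by ring, by ring, Or.inl h1,
        Or.inr ⟨h0im, Complex.conj_eq_iff_im.mp h3⟩⟩
    · have h3 : cj (d 3) = d 1 := by rw [← h1, Complex.conj_conj]
      rw [h1, h3] at hconj
      rw [Multiset.cons_swap (cj (d 2)) (d 1) 0, Multiset.cons_swap (d 3) (d 1) (cj (d 2) ::ₘ 0),
          Multiset.cons_swap (d 2) (d 3) 0, Multiset.cons_inj_right,
          Multiset.cons_inj_right] at hconj
      have h2 : (d 2).im = 0 := Complex.conj_eq_iff_im.mp (by simpa using hconj)
      exact ⟨d 1, d 3, d 0, d 2, ⟨1, rfl⟩, ⟨3, rfl⟩, ⟨0, rfl⟩, ⟨2, rfl⟩,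
        by ring, by ring, by ring, Or.inl h1, Or.inr ⟨h0im, h2⟩⟩
  · -- cj d0 = d1
    have h1 : cj (d 1) = d 0 := by rw [← h0, Complex.conj_conj]
    rw [h0, h1, Multiset.cons_swap, Multiset.cons_inj_right, Multiset.cons_inj_right] at hconj
    exact ⟨d 0, d 1, d 2, d 3, ⟨0, rfl⟩, ⟨1, rfl⟩, ⟨2, rfl⟩, ⟨3, rfl⟩,
      by ring, by ring, by ring, Or.inl h0, pair_closed_aux9 hconj⟩
  · -- cj d0 = d2
    have h2 : cj (d 2) = d 0 := by rw [← h0, Complex.conj_conj]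
    rw [h0, h2] at hconj
    rw [Multiset.cons_swap (cj (d 1)) (d 0) (cj (d 3) ::ₘ 0),
        Multiset.cons_swap (d 2) (d 0) (cj (d 1) ::ₘ cj (d 3) ::ₘ 0),
        Multiset.cons_inj_right,
        Multiset.cons_swap (d 1) (d 2) (d 3 ::ₘ 0),
        Multiset.cons_inj_right] at hconj
    exact ⟨d 0, d 2, d 1, d 3, ⟨0, rfl⟩, ⟨2, rfl⟩, ⟨1, rfl⟩, ⟨3, rfl⟩,
      by ring, by ring, by ring, Or.inl h0, pair_closed_aux9 hconj⟩
  · -- cj d0 = d3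
    have h3 : cj (d 3) = d 0 := by rw [← h0, Complex.conj_conj]
    rw [h0, h3] at hconj
    rw [Multiset.cons_swap (cj (d 2)) (d 0) 0,
        Multiset.cons_swap (cj (d 1)) (d 0) (cj (d 2) ::ₘ 0),
        Multiset.cons_swap (d 3) (d 0) (cj (d 1) ::ₘ cj (d 2) ::ₘ 0),
        Multiset.cons_inj_right,
        Multiset.cons_swap (d 2) (d 3) 0,
        Multiset.cons_swap (d 1) (d 3) (d 2 ::ₘ 0),
        Multiset.cons_inj_right] at hconj
    exact ⟨d 0, d 3, d 1, d 2, ⟨0, rfl⟩, ⟨3, rfl⟩, ⟨1, rfl⟩, ⟨2, rfl⟩,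
      by ring, by ring, by ring, Or.inl h0, pair_closed_aux9 hconj⟩

lemma ineq_r_wlog_aux9 (b1 b2 c1 c2 : ℝ) (hb1 : 0 ≤ b1) (hb2 : 0 ≤ b2)
    (hc1 : 0 ≤ c1) (hc2 : 0 ≤ c2) (hD : b2 ≤ b1)
    (hS : 0 ≤ b1^2 + b1*b2 + b2^2 - c1 - c2) :
    0 ≤ 12*b1^4 + 24*b1^3*b2 + 36*b1^2*b2^2 - 24*b1^2*c1 + 40*b1^2*c2 + 24*b1*b2^3
      + 40*b1*b2*c1 + 40*b1*b2*c2 + 12*b2^4 + 40*b2^2*c1 - 24*b2^2*c2 + 12*c1^2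
      - 40*c1*c2 + 12*c2^2 := by
  nlinarith [mul_nonneg hS hc2,
    mul_nonneg (mul_nonneg (sq_nonneg (b1 - b2)) hb1) hb2,
    mul_nonneg (mul_nonneg hS (sub_nonneg.mpr hD)) hb2,
    sq_nonneg (b2^2 - c2 - 3*b1*b2), sq_nonneg (b2^2 - c2 - 2*b1*b2),
    sq_nonneg (b1^2 - c1 - b2^2 + c2 - 3*b1*b2),
    sq_nonneg (b1^2 - c1 - b2^2 + c2 - 2*b1*b2),
    sq_nonneg (b1^2 - c1 - 3*b1*b2)]

lemma ineq_r_aux9 (b1 b2 c1 c2 : ℝ) (hb1 : 0 ≤ b1) (hb2 : 0 ≤ b2)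
    (hc1 : 0 ≤ c1) (hc2 : 0 ≤ c2)
    (hS : 0 ≤ b1^2 + b1*b2 + b2^2 - c1 - c2) :
    0 ≤ 12*b1^4 + 24*b1^3*b2 + 36*b1^2*b2^2 - 24*b1^2*c1 + 40*b1^2*c2 + 24*b1*b2^3
      + 40*b1*b2*c1 + 40*b1*b2*c2 + 12*b2^4 + 40*b2^2*c1 - 24*b2^2*c2 + 12*c1^2
      - 40*c1*c2 + 12*c2^2 := by
  rcases le_total b2 b1 with hD | hD
  · exact ineq_r_wlog_aux9 b1 b2 c1 c2 hb1 hb2 hc1 hc2 hD hS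
  · have h := ineq_r_wlog_aux9 b2 b1 c2 c1 hb2 hb1 hc2 hc1 hD (by linarith)
    linarith [h]

/-- If s₁ = 0 (and s₂ ≥ 0), a list of a positive Perron root and four
complex numbers with nonpositive real parts, closed under conjugation, admits a
nonnegative Toeplitz (hence persymmetric) realization of the stated form. -/
theorem stmt_9 (δ : ℝ) (hδ : 0 < δ) (d : Fin 4 → ℂ) (hre : ∀ i, (d i).re ≤ 0)
    (hconj : Multiset.map (starRingEnd ℂ) (↑(List.ofFn d) : Multiset ℂ)
      = (↑(List.ofFn d) : Multiset ℂ))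
    (sm : ℕ → ℂ) (hsm : ∀ k, sm k = (δ : ℂ) ^ k + ∑ i, d i ^ k)
    (h1 : sm 1 = 0) (h2 : 0 ≤ sm 2) :
    ∃ p q r s : ℝ, 0 ≤ p ∧ 0 ≤ q ∧ 0 ≤ r ∧ 0 ≤ s ∧
      (∀ i j, 0 ≤ (!![0, 1, 0, 0, 0;
                      p, 0, 1, 0, 0;
                      q, p, 0, 1, 0;
                      r, q, p, 0, 1;
                      s, r, q, p, 0] : Matrix (Fin 5) (Fin 5) ℝ) i j) ∧
      (Matrix.charpoly (!![0, 1, 0, 0, 0;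
                           p, 0, 1, 0, 0;
                           q, p, 0, 1, 0;
                           r, q, p, 0, 1;
                           s, r, q, p, 0] : Matrix (Fin 5) (Fin 5) ℝ)).map
          (algebraMap ℝ ℂ) = (X - C (δ : ℂ)) * ∏ i, (X - C (d i)) := by
  obtain ⟨u, v, w, z, ⟨iu, hu⟩, ⟨iv, hv⟩, ⟨iw, hw⟩, ⟨iz, hz⟩,
    hsum1, hsum2, hprodq, hg1, hg2⟩ := quad_struct_aux9 d hconj
  obtain ⟨b1, c1, hb1, hc1, huv1, huv2⟩ :=
    pair_bc_aux9 u v (hu ▸ hre iu) (hv ▸ hre iv) hg1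
  obtain ⟨b2, c2, hb2, hc2, hwz1, hwz2⟩ :=
    pair_bc_aux9 w z (hw ▸ hre iw) (hz ▸ hre iz) hg2
  have hδbc : δ = b1 + b2 := by
    have h1' : (δ:ℂ) ^ 1 + ∑ i, d i ^ 1 = 0 := by rw [← hsm 1, h1]
    rw [Fin.sum_univ_four] at h1'
    simp only [pow_one] at h1'
    have hx : (δ:ℂ) + (-(b1:ℂ) + -(b2:ℂ)) = 0 := by
      rw [← huv1, ← hwz1]; linear_combination h1' - hsum1
    have := congrArg Complex.re hx
    simp at this
    linarith
  have hS2h : 0 ≤ b1^2 + b1*b2 + b2^2 - c1 - c2 := by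
    have hsq : d 0 ^ 2 + d 1 ^ 2 + (d 2 ^ 2 + d 3 ^ 2)
        = ((b1^2 - 2*c1 + b2^2 - 2*c2 : ℝ) : ℂ) := by
      have e : u ^ 2 + v ^ 2 + (w ^ 2 + z ^ 2)
          = (u+v)^2 - 2*(u*v) + ((w+z)^2 - 2*(w*z)) := by ring
      rw [hsum2, e, huv1, huv2, hwz1, hwz2]
      push_cast; ring
    have hx : sm 2 = ((δ^2 + (b1^2 - 2*c1 + b2^2 - 2*c2) : ℝ) : ℂ) := by
      rw [hsm 2, Fin.sum_univ_four]
      rw [show (δ:ℂ)^2 + (d 0 ^ 2 + d 1 ^ 2 + d 2 ^ 2 + d 3 ^ 2)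
          = (δ:ℂ)^2 + (d 0 ^ 2 + d 1 ^ 2 + (d 2 ^ 2 + d 3 ^ 2)) by ring, hsq]
      push_cast; ring
    have h2' : (0:ℂ) ≤ ((δ^2 + (b1^2 - 2*c1 + b2^2 - 2*c2) : ℝ) : ℂ) := by
      rw [← hx]; exact h2
    rw [Complex.zero_le_real] at h2'
    nlinarith [h2', hδbc]
  refine ⟨(b1^2 + b1*b2 + b2^2 - c1 - c2)/4,
    (b1*b2*(b1+b2) + b1*c1 + b2*c2)/3,
    (12*b1^4 + 24*b1^3*b2 + 36*b1^2*b2^2 - 24*b1^2*c1 + 40*b1^2*c2 + 24*b1*b2^3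
      + 40*b1*b2*c1 + 40*b1*b2*c2 + 12*b2^4 + 40*b2^2*c1 - 24*b2^2*c2 + 12*c1^2
      - 40*c1*c2 + 12*c2^2)/128,
    ((b1^2 + b1*b2 + b2^2 - c1 - c2)*(b1*c1 + b2*c2) + 6*((b1+b2)*(c1*c2))
      + (b1+b2)*(b1*b2)*(b1^2 + b1*b2 + b2^2 - c1 - c2))/6,
    by linarith,
    by have := mul_nonneg (mul_nonneg hb1 hb2) (add_nonneg hb1 hb2)
       have := mul_nonneg hb1 hc1
       have := mul_nonneg hb2 hc2
       linarith,
    div_nonneg (ineq_r_aux9 b1 b2 c1 c2 hb1 hb2 hc1 hc2 hS2h) (by norm_num),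
    by have h1' := mul_nonneg hS2h (add_nonneg (mul_nonneg hb1 hc1) (mul_nonneg hb2 hc2))
       have h2' := mul_nonneg (mul_nonneg (add_nonneg hb1 hb2) hc1) hc2
       have h3' := mul_nonneg (mul_nonneg (add_nonneg hb1 hb2) (mul_nonneg hb1 hb2)) hS2h
       have h4' : (b1+b2)*(c1*c2) = (b1+b2)*c1*c2 := by ring
       linarith,
    ?_, ?_⟩
  · intro i j
    have hP : (0:ℝ) ≤ (b1^2 + b1*b2 + b2^2 - c1 - c2)/4 := by linarith
    have hQ : (0:ℝ) ≤ (b1*b2*(b1+b2) + b1*c1 + b2*c2)/3 := by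
      have := mul_nonneg (mul_nonneg hb1 hb2) (add_nonneg hb1 hb2)
      have := mul_nonneg hb1 hc1
      have := mul_nonneg hb2 hc2
      linarith
    have hR := div_nonneg (ineq_r_aux9 b1 b2 c1 c2 hb1 hb2 hc1 hc2 hS2h)
      (by norm_num : (0:ℝ) ≤ 128)
    have hS : (0:ℝ) ≤ ((b1^2 + b1*b2 + b2^2 - c1 - c2)*(b1*c1 + b2*c2)
        + 6*((b1+b2)*(c1*c2))
        + (b1+b2)*(b1*b2)*(b1^2 + b1*b2 + b2^2 - c1 - c2))/6 := by
      have h1' := mul_nonneg hS2h (add_nonneg (mul_nonneg hb1 hc1) (mul_nonneg hb2 hc2))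
      have h2' := mul_nonneg (mul_nonneg (add_nonneg hb1 hb2) hc1) hc2
      have h3' := mul_nonneg (mul_nonneg (add_nonneg hb1 hb2) (mul_nonneg hb1 hb2)) hS2h
      have h4' : (b1+b2)*(c1*c2) = (b1+b2)*c1*c2 := by ring
      linarith
    fin_cases i <;> fin_cases j <;>
      simp [Matrix.cons_val_zero, Matrix.cons_val_one, Matrix.head_cons] <;>
      first
        | exact hP
        | exact hQ
        | exact hR
        | exact hS
        | norm_num
  · rw [charpoly_toeplitz_aux9]
    have e1 : (X - C u) * (X - C v) = X^2 + C ((b1:ℝ):ℂ) * X + C ((c1:ℝ):ℂ) := by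
      have e : (X - C u) * (X - C v) = X^2 - (C u + C v) * X + C u * C v := by ring
      rw [e, ← C_add, ← C_mul, huv1, huv2, map_neg]; ring
    have e2 : (X - C w) * (X - C z) = X^2 + C ((b2:ℝ):ℂ) * X + C ((c2:ℝ):ℂ) := by
      have e : (X - C w) * (X - C z) = X^2 - (C w + C z) * X + C w * C z := by ring
      rw [e, ← C_add, ← C_mul, hwz1, hwz2, map_neg]; ring
    have hprodC : ∏ i, (X - C (d i))
        = (X^2 + C ((b1:ℝ):ℂ) * X + C ((c1:ℝ):ℂ))
          * (X^2 + C ((b2:ℝ):ℂ) * X + C ((c2:ℝ):ℂ)) := by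
      rw [Fin.prod_univ_four, ← e1, ← e2, ← hprodq]; ring
    rw [hprodC]
    simp only [Polynomial.map_add, Polynomial.map_sub, Polynomial.map_mul,
      Polynomial.map_pow, Polynomial.map_X, Polynomial.map_C, Complex.coe_algebraMap]
    apply Polynomial.funext
    intro t
    simp only [eval_add, eval_sub, eval_mul, eval_pow, eval_X, eval_C]
    rw [hδbc]
    push_cast
    ring
end

section
/- Let a,b,c,d be real numbers with d ≥ 0, a + b + 2c = 0, and suppose a is the Perron root of the list Δ = (a, b, c+id, c−id), i.e., a > 0, a ≥ |b| and a ≥ √(c²+d²). Assume Δ is realizable and a − b − 2d ≥ 0. Then for every t > 0 the perturbed list Δ′ = (a+t, b−t, c+i(d−t), c−i(d−t)) is realizable. -/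
open Matrix Polynomial

set_option maxHeartbeats 1000000 in
set_option maxRecDepth 10000 in
theorem my_det_fin_four {R : Type*} [CommRing R] (A : Matrix (Fin 4) (Fin 4) R) :
    A.det =
      A 0 0 * A 1 1 * A 2 2 * A 3 3 - A 0 0 * A 1 1 * A 2 3 * A 3 2 -
      A 0 0 * A 1 2 * A 2 1 * A 3 3 + A 0 0 * A 1 2 * A 2 3 * A 3 1 +
      A 0 0 * A 1 3 * A 2 1 * A 3 2 - A 0 0 * A 1 3 * A 2 2 * A 3 1 -
      A 0 1 * A 1 0 * A 2 2 * A 3 3 + A 0 1 * A 1 0 * A 2 3 * A 3 2 +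
      A 0 1 * A 1 2 * A 2 0 * A 3 3 - A 0 1 * A 1 2 * A 2 3 * A 3 0 -
      A 0 1 * A 1 3 * A 2 0 * A 3 2 + A 0 1 * A 1 3 * A 2 2 * A 3 0 +
      A 0 2 * A 1 0 * A 2 1 * A 3 3 - A 0 2 * A 1 0 * A 2 3 * A 3 1 -
      A 0 2 * A 1 1 * A 2 0 * A 3 3 + A 0 2 * A 1 1 * A 2 3 * A 3 0 +
      A 0 2 * A 1 3 * A 2 0 * A 3 1 - A 0 2 * A 1 3 * A 2 1 * A 3 0 -
      A 0 3 * A 1 0 * A 2 1 * A 3 2 + A 0 3 * A 1 0 * A 2 2 * A 3 1 +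
      A 0 3 * A 1 1 * A 2 0 * A 3 2 - A 0 3 * A 1 1 * A 2 2 * A 3 0 -
      A 0 3 * A 1 2 * A 2 0 * A 3 1 + A 0 3 * A 1 2 * A 2 1 * A 3 0 := by
  simp [Matrix.det_succ_row_zero, Fin.sum_univ_succ, Fin.succAbove,
    show (Fin.succ 2 : Fin 4) = 3 from rfl, show (Fin.castSucc 2 : Fin 4) = 2 from rfl,
    show ((1:Fin 4) < 3) from by decide]
  ring

set_option maxHeartbeats 2000000 in
set_option maxRecDepth 10000 in
theorem my_circulant_charpoly (Q R S : ℝ) :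
    (Matrix.charpoly !![(0:ℝ), Q, R, S; S, 0, Q, R; R, S, 0, Q; Q, R, S, 0]).map
        (algebraMap ℝ ℂ) =
      (X - C ((Q:ℂ) + R + S)) * (X - C (-(Q:ℂ) + R - S)) *
        ((X - C (-(R:ℂ) + (Q - S) * Complex.I)) * (X - C (-(R:ℂ) - (Q - S) * Complex.I))) := by
  rw [← Matrix.charpoly_map]
  have hmap : (!![(0:ℝ), Q, R, S; S, 0, Q, R; R, S, 0, Q; Q, R, S, 0]).map (algebraMap ℝ ℂ)
      = !![(0:ℂ), Q, R, S; S, 0, Q, R; R, S, 0, Q; Q, R, S, 0] := by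
    ext i j
    fin_cases i <;> fin_cases j <;> simp [Matrix.map_apply]
  rw [hmap, Matrix.charpoly]
  have hcm : charmatrix !![(0:ℂ), Q, R, S; S, 0, Q, R; R, S, 0, Q; Q, R, S, 0]
      = !![X - C 0, -C (Q:ℂ), -C (R:ℂ), -C (S:ℂ);
           -C (S:ℂ), X - C 0, -C (Q:ℂ), -C (R:ℂ);
           -C (R:ℂ), -C (S:ℂ), X - C 0, -C (Q:ℂ);
           -C (Q:ℂ), -C (R:ℂ), -C (S:ℂ), X - C 0] := by
    ext i j
    fin_cases i <;> fin_cases j <;>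
      simp [charmatrix_apply, Matrix.diagonal_apply, Matrix.one_apply]
  rw [hcm, my_det_fin_four]
  have hC : (C Complex.I : ℂ[X]) * C Complex.I = -1 := by
    rw [← _root_.map_mul, Complex.I_mul_I, _root_.map_neg, _root_.map_one]
  simp only [Matrix.cons_val', Matrix.cons_val_zero, Matrix.cons_val_one, Matrix.head_cons,
    Matrix.head_fin_const, Matrix.cons_val_fin_one, Matrix.empty_val', Matrix.of_apply,
    Matrix.cons_val_two, Matrix.cons_val_three, Matrix.tail_cons, Matrix.cons_val_succ,
    Matrix.cons_val_three, Matrix.cons_val_four, Matrix.cons_val_succ,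
    show ((2:Fin 4)) = Fin.succ 1 from rfl, show ((3:Fin 4)) = Fin.succ 2 from rfl,
    _root_.map_add, _root_.map_sub, _root_.map_mul, _root_.map_neg, _root_.map_zero]
  linear_combination ((X - (C (Q:ℂ) + C (R:ℂ) + C (S:ℂ))) *
    (X - (-C (Q:ℂ) + C (R:ℂ) - C (S:ℂ))) * (C (Q:ℂ) - C (S:ℂ))^2) * hC

/-- A list of n complex numbers is realizable if it is the spectrum of an
entrywise nonnegative real matrix. -/
def Realizable {n : ℕ} (δ : Fin n → ℂ) : Prop :=
  ∃ A : Matrix (Fin n) (Fin n) ℝ, (∀ i j, 0 ≤ A i j) ∧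
    (Matrix.charpoly A).map (algebraMap ℝ ℂ) = ∏ i, (X - C (δ i))

set_option maxHeartbeats 1000000 in
/-- Perturbation of a realizable trace-zero list of four complex
numbers, when a - b - 2d ≥ 0. -/
theorem stmt_10 (a b c d : ℝ) (hd : 0 ≤ d) (hsum : a + b + 2 * c = 0)
    (ha : 0 < a) (hab : |b| ≤ a) (hacd : Real.sqrt (c ^ 2 + d ^ 2) ≤ a)
    (hreal : Realizable ![(a : ℂ), (b : ℂ), (c : ℂ) + d * Complex.I,
      (c : ℂ) - d * Complex.I])
    (habd : 0 ≤ a - b - 2 * d) :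
    ∀ t : ℝ, 0 < t →
      Realizable ![((a + t : ℝ) : ℂ), ((b - t : ℝ) : ℂ),
        (c : ℂ) + (d - t : ℝ) * Complex.I, (c : ℂ) - (d - t : ℝ) * Complex.I] := by
  intro t ht
  obtain ⟨hb1, hb2⟩ := abs_le.mp hab
  refine ⟨!![(0:ℝ), (a - b + 2*d)/4, (a + b)/2, (a - b - 2*d)/4 + t;
             (a - b - 2*d)/4 + t, 0, (a - b + 2*d)/4, (a + b)/2;
             (a + b)/2, (a - b - 2*d)/4 + t, 0, (a - b + 2*d)/4;
             (a - b + 2*d)/4, (a + b)/2, (a - b - 2*d)/4 + t, 0], ?_, ?_⟩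
  · intro i j
    fin_cases i <;> fin_cases j <;> simp <;> linarith
  · rw [my_circulant_charpoly, Fin.prod_univ_four]
    have e0 : (((a - b + 2*d)/4 : ℝ) : ℂ) + (((a + b)/2 : ℝ) : ℂ) + (((a - b - 2*d)/4 + t : ℝ) : ℂ)
        = ((a + t : ℝ) : ℂ) := by push_cast; ring
    have e1 : -(((a - b + 2*d)/4 : ℝ) : ℂ) + (((a + b)/2 : ℝ) : ℂ) - (((a - b - 2*d)/4 + t : ℝ) : ℂ)
        = ((b - t : ℝ) : ℂ) := by push_cast; ring
    have e2 : -(((a + b)/2 : ℝ) : ℂ) = (c : ℂ) := by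
      have h : (a:ℂ) + b + 2*c = 0 := by exact_mod_cast congrArg Complex.ofReal hsum
      push_cast; linear_combination -h/2
    have e3 : (((a - b + 2*d)/4 : ℝ) : ℂ) - (((a - b - 2*d)/4 + t : ℝ) : ℂ) = ((d - t : ℝ) : ℂ) := by
      push_cast; ring
    rw [e0, e1, e2, e3]
    simp only [Matrix.cons_val', Matrix.cons_val_zero, Matrix.cons_val_one, Matrix.head_cons,
      Matrix.cons_val_fin_one, Matrix.empty_val', Matrix.of_apply, Matrix.tail_cons,
      Matrix.cons_val_succ, show ((2:Fin 4)) = Fin.succ 1 from rfl,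
      show ((3:Fin 4)) = Fin.succ 2 from rfl, show ((2:Fin 3)) = Fin.succ 1 from rfl, show ((1:Fin 2)) = Fin.succ 0 from rfl]
    ring
end

section
/- Let a,b,c,d be real numbers with d ≥ 0, a + b + 2c = 0, and suppose a is the Perron root of the list Δ = (a, b, c+id, c−id), i.e., a > 0, a ≥ |b| and a ≥ √(c²+d²). Assume Δ is realizable and a − b − 2d < 0. Then for every t ≥ (b + 2d − a)/4 the perturbed list Δ′ = (a+t, b−t, c+i(d−t), c−i(d−t)) is realizable. -/
open Matrix Polynomial

set_option maxHeartbeats 1000000 in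
/-- The characteristic polynomial of the 4×4 circulant matrix with first row
`(0, p, q, r)`. -/
lemma circ_charpoly (p q r : ℝ) :
    (Matrix.of ![![0,p,q,r],![r,0,p,q],![q,r,0,p],![p,q,r,0]]).charpoly =
      (X - C (p+q+r)) * (X - C (q-p-r)) * (X^2 + C (2*q) * X + C (q^2 + (p-r)^2)) := by
  rw [Matrix.charpoly]
  have hm : (Matrix.of ![![0,p,q,r],![r,0,p,q],![q,r,0,p],![p,q,r,0]] : Matrix (Fin 4) (Fin 4) ℝ).charmatrix
      = !![X, -C p, -C q, -C r; -C r, X, -C p, -C q; -C q, -C r, X, -C p; -C p, -C q, -C r, X] := by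
    ext i j
    fin_cases i <;> fin_cases j <;>
      simp [Matrix.charmatrix, Matrix.scalar_apply, Matrix.diagonal]
  rw [hm]
  simp [Matrix.det_succ_row_zero, Fin.sum_univ_succ, Fin.succAbove, Fin.castSucc,
    Fin.castAdd, Fin.castLE, Fin.succ, map_ofNat, _root_.map_mul]
  ring

/-- Expanding a conjugate pair of linear factors over `ℂ`. -/
lemma pair_expand (u v : ℝ) :
    (X - C ((u:ℂ) + v * Complex.I)) * (X - C ((u:ℂ) - v * Complex.I))
      = X^2 - C (((2*u : ℝ) : ℂ)) * X + C (((u^2 + v^2 : ℝ) : ℂ)) := by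
  have h1 : ((u:ℂ) + v*Complex.I) + ((u:ℂ) - v*Complex.I) = ((2*u : ℝ) : ℂ) := by
    push_cast; ring
  have h2 : ((u:ℂ) + v*Complex.I) * ((u:ℂ) - v*Complex.I) = ((u^2 + v^2 : ℝ) : ℂ) := by
    have := Complex.I_sq
    push_cast
    linear_combination (-(v:ℂ)^2) * this
  rw [← h1, ← h2]
  simp only [_root_.map_add, _root_.map_sub, _root_.map_mul]
  ring

/-- The spectrum of the nonnegative circulant with first row `(0, p, q, r)` is
`(p+q+r, q-p-r, -q ± (p-r)i)`, hence that list is realizable. -/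
lemma circ_realizable (p q r : ℝ) (hp : 0 ≤ p) (hq : 0 ≤ q) (hr : 0 ≤ r) :
    Realizable ![((p+q+r : ℝ) : ℂ), ((q-p-r : ℝ) : ℂ),
      ((-q : ℝ) : ℂ) + ((p-r : ℝ) : ℂ) * Complex.I,
      ((-q : ℝ) : ℂ) - ((p-r : ℝ) : ℂ) * Complex.I] := by
  refine ⟨Matrix.of ![![0,p,q,r],![r,0,p,q],![q,r,0,p],![p,q,r,0]], ?_, ?_⟩
  · intro i j
    fin_cases i <;> fin_cases j <;> simp [hp, hq, hr]
  · rw [circ_charpoly, Fin.prod_univ_four]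
    simp only [Matrix.cons_val_zero, Matrix.cons_val_one, Matrix.head_cons,
      Matrix.cons_val_two, Matrix.tail_cons, Matrix.cons_val_three]
    rw [mul_assoc, mul_assoc, pair_expand (-q) (p-r)]
    rw [Polynomial.map_mul, Polynomial.map_mul, Polynomial.map_sub, Polynomial.map_sub,
      Polynomial.map_add, Polynomial.map_add, Polynomial.map_mul, Polynomial.map_pow,
      Polynomial.map_X, Polynomial.map_C, Polynomial.map_C, Polynomial.map_C, Polynomial.map_C]
    simp only [Complex.coe_algebraMap]
    push_cast
    simp only [_root_.map_add, _root_.map_sub, _root_.map_mul, _root_.map_neg,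
      _root_.map_pow, map_ofNat]
    ring

/-- Perturbation of a realizable trace-zero list of four complex
numbers, when a - b - 2d < 0, for t ≥ (b + 2d - a)/4. -/
theorem stmt_11 (a b c d : ℝ) (hd : 0 ≤ d) (hsum : a + b + 2 * c = 0)
    (ha : 0 < a) (hab : |b| ≤ a) (hacd : Real.sqrt (c ^ 2 + d ^ 2) ≤ a)
    (hreal : Realizable ![(a : ℂ), (b : ℂ), (c : ℂ) + d * Complex.I,
      (c : ℂ) - d * Complex.I])
    (habd : a - b - 2 * d < 0) :
    ∀ t : ℝ, (b + 2 * d - a) / 4 ≤ t →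
      Realizable ![((a + t : ℝ) : ℂ), ((b - t : ℝ) : ℂ),
        (c : ℂ) + (d - t : ℝ) * Complex.I, (c : ℂ) - (d - t : ℝ) * Complex.I] := by
  intro t ht
  obtain ⟨hb1, hb2⟩ := abs_le.mp hab
  set p := (a - b + 2*d)/4 with hpdef
  set q := (a + b)/2 with hqdef
  set r := (a - b + 4*t - 2*d)/4 with hrdef
  have hp : 0 ≤ p := by rw [hpdef]; linarith
  have hq : 0 ≤ q := by rw [hqdef]; linarith
  have hr : 0 ≤ r := by rw [hrdef]; linarith
  have e1 : (a + t : ℝ) = p + q + r := by rw [hpdef, hqdef, hrdef]; ring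
  have e2 : (b - t : ℝ) = q - p - r := by rw [hpdef, hqdef, hrdef]; ring
  have e3 : c = -q := by rw [hqdef]; linarith
  have e4 : (d - t : ℝ) = p - r := by rw [hpdef, hrdef]; ring
  rw [e1, e2, e3, e4]
  exact circ_realizable p q r hp hq hr
end

section
/- Let δ, a, b, c, d be real numbers with δ > 0, a ≤ 0, c ≤ 0 and b ≥ 0, and assume the list Δ = (δ, a+ib, a−ib, c+id, c−id) is realizable. Then for every t > 0 the perturbed list Δ′ = (δ+2t, (a−t)+i(b−t), (a−t)−i(b−t), c+id, c−id) is realizable. -/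
open Matrix Polynomial

namespace Stmt13Helpers

variable {R : Type*} [CommRing R]

theorem det_fin_four' (A : Matrix (Fin 4) (Fin 4) R) :
    det A = A 0 0*A 1 1*A 2 2*A 3 3 - A 0 0*A 1 1*A 2 3*A 3 2 - A 0 0*A 1 2*A 2 1*A 3 3 + A 0 0*A 1 2*A 2 3*A 3 1 + A 0 0*A 1 3*A 2 1*A 3 2 - A 0 0*A 1 3*A 2 2*A 3 1 - A 0 1*A 1 0*A 2 2*A 3 3 + A 0 1*A 1 0*A 2 3*A 3 2 + A 0 1*A 1 2*A 2 0*A 3 3 - A 0 1*A 1 2*A 2 3*A 3 0 - A 0 1*A 1 3*A 2 0*A 3 2 + A 0 1*A 1 3*A 2 2*A 3 0 + A 0 2*A 1 0*A 2 1*A 3 3 - A 0 2*A 1 0*A 2 3*A 3 1 - A 0 2*A 1 1*A 2 0*A 3 3 + A 0 2*A 1 1*A 2 3*A 3 0 + A 0 2*A 1 3*A 2 0*A 3 1 - A 0 2*A 1 3*A 2 1*A 3 0 - A 0 3*A 1 0*A 2 1*A 3 2 + A 0 3*A 1 0*A 2 2*A 3 1 + A 0 3*A 1 1*A 2 0*A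 3 2 - A 0 3*A 1 1*A 2 2*A 3 0 - A 0 3*A 1 2*A 2 0*A 3 1 + A 0 3*A 1 2*A 2 1*A 3 0 := by
  rw [det_succ_row_zero, Fin.sum_univ_four]
  norm_num [det_fin_three, Fin.succAbove, Fin.lt_def, Fin.ext_iff, submatrix_apply,
    show (Fin.succ 2 : Fin 4) = 3 from rfl, show ((3:Fin 4):ℕ) = 3 from rfl,
    show ((2:Fin 3):ℕ) = 2 from rfl, show (Fin.castSucc 2 : Fin 4) = 2 from rfl]
  ring

theorem det_fin_five' (A : Matrix (Fin 5) (Fin 5) R) :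
    det A = A 0 0*A 1 1*A 2 2*A 3 3*A 4 4 - A 0 0*A 1 1*A 2 2*A 3 4*A 4 3 - A 0 0*A 1 1*A 2 3*A 3 2*A 4 4 + A 0 0*A 1 1*A 2 3*A 3 4*A 4 2 + A 0 0*A 1 1*A 2 4*A 3 2*A 4 3 - A 0 0*A 1 1*A 2 4*A 3 3*A 4 2 - A 0 0*A 1 2*A 2 1*A 3 3*A 4 4 + A 0 0*A 1 2*A 2 1*A 3 4*A 4 3 + A 0 0*A 1 2*A 2 3*A 3 1*A 4 4 - A 0 0*A 1 2*A 2 3*A 3 4*A 4 1 - A 0 0*A 1 2*A 2 4*A 3 1*A 4 3 + A 0 0*A 1 2*A 2 4*A 3 3*A 4 1 + A 0 0*A 1 3*A 2 1*A 3 2*A 4 4 - A 0 0*A 1 3*A 2 1*A 3 4*A 4 2 - A 0 0*A 1 3*A 2 2*A 3 1*A 4 4 + A 0 0*A 1 3*A 2 2*A 3 4*A 4 1 + A 0 0*A 1 3*A 2 4*A 3 1*A 4 2 - A 0 0*A 1 3*A 2 4*A 3 2*A 4 1 - A 0 0*A 1 4*A 2 1*A 3 2*A 4 3 + A 0 0*A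 1 4*A 2 1*A 3 3*A 4 2 + A 0 0*A 1 4*A 2 2*A 3 1*A 4 3 - A 0 0*A 1 4*A 2 2*A 3 3*A 4 1 - A 0 0*A 1 4*A 2 3*A 3 1*A 4 2 + A 0 0*A 1 4*A 2 3*A 3 2*A 4 1 - A 0 1*A 1 0*A 2 2*A 3 3*A 4 4 + A 0 1*A 1 0*A 2 2*A 3 4*A 4 3 + A 0 1*A 1 0*A 2 3*A 3 2*A 4 4 - A 0 1*A 1 0*A 2 3*A 3 4*A 4 2 - A 0 1*A 1 0*A 2 4*A 3 2*A 4 3 + A 0 1*A 1 0*A 2 4*A 3 3*A 4 2 + A 0 1*A 1 2*A 2 0*A 3 3*A 4 4 - A 0 1*A 1 2*A 2 0*A 3 4*A 4 3 - A 0 1*A 1 2*A 2 3*A 3 0*A 4 4 + A 0 1*A 1 2*A 2 3*A 3 4*A 4 0 + A 0 1*A 1 2*A 2 4*A 3 0*A 4 3 - A 0 1*A 1 2*A 2 4*A 3 3*A 4 0 - A 0 1*A 1 3*A 2 0*A 3 2*A 4 4 + A 0 1*A 1 3*A 2 0*A 3 4*A 4 2 + A 0 1*A 1 3*A 2 2*A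 3 0*A 4 4 - A 0 1*A 1 3*A 2 2*A 3 4*A 4 0 - A 0 1*A 1 3*A 2 4*A 3 0*A 4 2 + A 0 1*A 1 3*A 2 4*A 3 2*A 4 0 + A 0 1*A 1 4*A 2 0*A 3 2*A 4 3 - A 0 1*A 1 4*A 2 0*A 3 3*A 4 2 - A 0 1*A 1 4*A 2 2*A 3 0*A 4 3 + A 0 1*A 1 4*A 2 2*A 3 3*A 4 0 + A 0 1*A 1 4*A 2 3*A 3 0*A 4 2 - A 0 1*A 1 4*A 2 3*A 3 2*A 4 0 + A 0 2*A 1 0*A 2 1*A 3 3*A 4 4 - A 0 2*A 1 0*A 2 1*A 3 4*A 4 3 - A 0 2*A 1 0*A 2 3*A 3 1*A 4 4 + A 0 2*A 1 0*A 2 3*A 3 4*A 4 1 + A 0 2*A 1 0*A 2 4*A 3 1*A 4 3 - A 0 2*A 1 0*A 2 4*A 3 3*A 4 1 - A 0 2*A 1 1*A 2 0*A 3 3*A 4 4 + A 0 2*A 1 1*A 2 0*A 3 4*A 4 3 + A 0 2*A 1 1*A 2 3*A 3 0*A 4 4 - A 0 2*A 1 1*A 2 3*A 3 4*A 4 0 -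 A 0 2*A 1 1*A 2 4*A 3 0*A 4 3 + A 0 2*A 1 1*A 2 4*A 3 3*A 4 0 + A 0 2*A 1 3*A 2 0*A 3 1*A 4 4 - A 0 2*A 1 3*A 2 0*A 3 4*A 4 1 - A 0 2*A 1 3*A 2 1*A 3 0*A 4 4 + A 0 2*A 1 3*A 2 1*A 3 4*A 4 0 + A 0 2*A 1 3*A 2 4*A 3 0*A 4 1 - A 0 2*A 1 3*A 2 4*A 3 1*A 4 0 - A 0 2*A 1 4*A 2 0*A 3 1*A 4 3 + A 0 2*A 1 4*A 2 0*A 3 3*A 4 1 + A 0 2*A 1 4*A 2 1*A 3 0*A 4 3 - A 0 2*A 1 4*A 2 1*A 3 3*A 4 0 - A 0 2*A 1 4*A 2 3*A 3 0*A 4 1 + A 0 2*A 1 4*A 2 3*A 3 1*A 4 0 - A 0 3*A 1 0*A 2 1*A 3 2*A 4 4 + A 0 3*A 1 0*A 2 1*A 3 4*A 4 2 + A 0 3*A 1 0*A 2 2*A 3 1*A 4 4 - A 0 3*A 1 0*A 2 2*A 3 4*A 4 1 - A 0 3*A 1 0*A 2 4*A 3 1*A 4 2 + A 0 3*A 1 0*A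 2 4*A 3 2*A 4 1 + A 0 3*A 1 1*A 2 0*A 3 2*A 4 4 - A 0 3*A 1 1*A 2 0*A 3 4*A 4 2 - A 0 3*A 1 1*A 2 2*A 3 0*A 4 4 + A 0 3*A 1 1*A 2 2*A 3 4*A 4 0 + A 0 3*A 1 1*A 2 4*A 3 0*A 4 2 - A 0 3*A 1 1*A 2 4*A 3 2*A 4 0 - A 0 3*A 1 2*A 2 0*A 3 1*A 4 4 + A 0 3*A 1 2*A 2 0*A 3 4*A 4 1 + A 0 3*A 1 2*A 2 1*A 3 0*A 4 4 - A 0 3*A 1 2*A 2 1*A 3 4*A 4 0 - A 0 3*A 1 2*A 2 4*A 3 0*A 4 1 + A 0 3*A 1 2*A 2 4*A 3 1*A 4 0 + A 0 3*A 1 4*A 2 0*A 3 1*A 4 2 - A 0 3*A 1 4*A 2 0*A 3 2*A 4 1 - A 0 3*A 1 4*A 2 1*A 3 0*A 4 2 + A 0 3*A 1 4*A 2 1*A 3 2*A 4 0 + A 0 3*A 1 4*A 2 2*A 3 0*A 4 1 - A 0 3*A 1 4*A 2 2*A 3 1*A 4 0 + A 0 4*A 1 0*A 2 1*A 3 2*A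 4 3 - A 0 4*A 1 0*A 2 1*A 3 3*A 4 2 - A 0 4*A 1 0*A 2 2*A 3 1*A 4 3 + A 0 4*A 1 0*A 2 2*A 3 3*A 4 1 + A 0 4*A 1 0*A 2 3*A 3 1*A 4 2 - A 0 4*A 1 0*A 2 3*A 3 2*A 4 1 - A 0 4*A 1 1*A 2 0*A 3 2*A 4 3 + A 0 4*A 1 1*A 2 0*A 3 3*A 4 2 + A 0 4*A 1 1*A 2 2*A 3 0*A 4 3 - A 0 4*A 1 1*A 2 2*A 3 3*A 4 0 - A 0 4*A 1 1*A 2 3*A 3 0*A 4 2 + A 0 4*A 1 1*A 2 3*A 3 2*A 4 0 + A 0 4*A 1 2*A 2 0*A 3 1*A 4 3 - A 0 4*A 1 2*A 2 0*A 3 3*A 4 1 - A 0 4*A 1 2*A 2 1*A 3 0*A 4 3 + A 0 4*A 1 2*A 2 1*A 3 3*A 4 0 + A 0 4*A 1 2*A 2 3*A 3 0*A 4 1 - A 0 4*A 1 2*A 2 3*A 3 1*A 4 0 - A 0 4*A 1 3*A 2 0*A 3 1*A 4 2 + A 0 4*A 1 3*A 2 0*A 3 2*A 4 1 + A 0 4*A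 1 3*A 2 1*A 3 0*A 4 2 - A 0 4*A 1 3*A 2 1*A 3 2*A 4 0 - A 0 4*A 1 3*A 2 2*A 3 0*A 4 1 + A 0 4*A 1 3*A 2 2*A 3 1*A 4 0 := by
  rw [det_succ_row_zero, Fin.sum_univ_five]
  norm_num [det_fin_four', Fin.succAbove, Fin.lt_def, Fin.ext_iff, submatrix_apply,
    show (Fin.succ 2 : Fin 5) = 3 from rfl, show (Fin.succ 3 : Fin 5) = 4 from rfl,
    show ((3:Fin 5):ℕ) = 3 from rfl, show ((4:Fin 5):ℕ) = 4 from rfl,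
    show ((2:Fin 4):ℕ) = 2 from rfl, show ((3:Fin 4):ℕ) = 3 from rfl,
    show (Fin.castSucc 2 : Fin 5) = 2 from rfl, show (Fin.castSucc 3 : Fin 5) = 3 from rfl]
  ring

set_option maxHeartbeats 1000000 in
theorem eval_charpoly_five (A : Matrix (Fin 5) (Fin 5) R) (x : R) :
    A.charpoly.eval x = x^5 - (A 0 0 + A 1 1 + A 2 2 + A 3 3 + A 4 4) * x^4 + (A 0 0*A 1 1 - A 0 1*A 1 0 + A 0 0*A 2 2 - A 0 2*A 2 0 + A 0 0*A 3 3 - A 0 3*A 3 0 + A 0 0*A 4 4 - A 0 4*A 4 0 + A 1 1*A 2 2 - A 1 2*A 2 1 + A 1 1*A 3 3 - A 1 3*A 3 1 + A 1 1*A 4 4 - A 1 4*A 4 1 + A 2 2*A 3 3 - A 2 3*A 3 2 + A 2 2*A 4 4 - A 2 4*A 4 2 + A 3 3*A 4 4 - A 3 4*A 4 3) * x^3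
      - (A 0 0*A 1 1*A 2 2 - A 0 0*A 1 2*A 2 1 - A 0 1*A 1 0*A 2 2 + A 0 1*A 1 2*A 2 0 + A 0 2*A 1 0*A 2 1 - A 0 2*A 1 1*A 2 0 + A 0 0*A 1 1*A 3 3 - A 0 0*A 1 3*A 3 1 - A 0 1*A 1 0*A 3 3 + A 0 1*A 1 3*A 3 0 + A 0 3*A 1 0*A 3 1 - A 0 3*A 1 1*A 3 0 + A 0 0*A 1 1*A 4 4 - A 0 0*A 1 4*A 4 1 - A 0 1*A 1 0*A 4 4 + A 0 1*A 1 4*A 4 0 + A 0 4*A 1 0*A 4 1 - A 0 4*A 1 1*A 4 0 + A 0 0*A 2 2*A 3 3 - A 0 0*A 2 3*A 3 2 - A 0 2*A 2 0*A 3 3 + A 0 2*A 2 3*A 3 0 + A 0 3*A 2 0*A 3 2 - A 0 3*A 2 2*A 3 0 + A 0 0*A 2 2*A 4 4 - A 0 0*A 2 4*A 4 2 - A 0 2*A 2 0*A 4 4 + A 0 2*A 2 4*A 4 0 + A 0 4*A 2 0*A 4 2 - A 0 4*A 2 2*A 4 0 + A 0 0*A 3 3*A 4 4 - A 0 0*A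 3 4*A 4 3 - A 0 3*A 3 0*A 4 4 + A 0 3*A 3 4*A 4 0 + A 0 4*A 3 0*A 4 3 - A 0 4*A 3 3*A 4 0 + A 1 1*A 2 2*A 3 3 - A 1 1*A 2 3*A 3 2 - A 1 2*A 2 1*A 3 3 + A 1 2*A 2 3*A 3 1 + A 1 3*A 2 1*A 3 2 - A 1 3*A 2 2*A 3 1 + A 1 1*A 2 2*A 4 4 - A 1 1*A 2 4*A 4 2 - A 1 2*A 2 1*A 4 4 + A 1 2*A 2 4*A 4 1 + A 1 4*A 2 1*A 4 2 - A 1 4*A 2 2*A 4 1 + A 1 1*A 3 3*A 4 4 - A 1 1*A 3 4*A 4 3 - A 1 3*A 3 1*A 4 4 + A 1 3*A 3 4*A 4 1 + A 1 4*A 3 1*A 4 3 - A 1 4*A 3 3*A 4 1 + A 2 2*A 3 3*A 4 4 - A 2 2*A 3 4*A 4 3 - A 2 3*A 3 2*A 4 4 + A 2 3*A 3 4*A 4 2 + A 2 4*A 3 2*A 4 3 - A 2 4*A 3 3*A 4 2) * x^2 + (A 0 0*A 1 1*A 2 2*A 3 3 - A 0 0*A 1 1*A 2 3*A 3 2 -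 A 0 0*A 1 2*A 2 1*A 3 3 + A 0 0*A 1 2*A 2 3*A 3 1 + A 0 0*A 1 3*A 2 1*A 3 2 - A 0 0*A 1 3*A 2 2*A 3 1 - A 0 1*A 1 0*A 2 2*A 3 3 + A 0 1*A 1 0*A 2 3*A 3 2 + A 0 1*A 1 2*A 2 0*A 3 3 - A 0 1*A 1 2*A 2 3*A 3 0 - A 0 1*A 1 3*A 2 0*A 3 2 + A 0 1*A 1 3*A 2 2*A 3 0 + A 0 2*A 1 0*A 2 1*A 3 3 - A 0 2*A 1 0*A 2 3*A 3 1 - A 0 2*A 1 1*A 2 0*A 3 3 + A 0 2*A 1 1*A 2 3*A 3 0 + A 0 2*A 1 3*A 2 0*A 3 1 - A 0 2*A 1 3*A 2 1*A 3 0 - A 0 3*A 1 0*A 2 1*A 3 2 + A 0 3*A 1 0*A 2 2*A 3 1 + A 0 3*A 1 1*A 2 0*A 3 2 - A 0 3*A 1 1*A 2 2*A 3 0 - A 0 3*A 1 2*A 2 0*A 3 1 + A 0 3*A 1 2*A 2 1*A 3 0 + A 0 0*A 1 1*A 2 2*A 4 4 - A 0 0*A 1 1*A 2 4*A 4 2 -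 A 0 0*A 1 2*A 2 1*A 4 4 + A 0 0*A 1 2*A 2 4*A 4 1 + A 0 0*A 1 4*A 2 1*A 4 2 - A 0 0*A 1 4*A 2 2*A 4 1 - A 0 1*A 1 0*A 2 2*A 4 4 + A 0 1*A 1 0*A 2 4*A 4 2 + A 0 1*A 1 2*A 2 0*A 4 4 - A 0 1*A 1 2*A 2 4*A 4 0 - A 0 1*A 1 4*A 2 0*A 4 2 + A 0 1*A 1 4*A 2 2*A 4 0 + A 0 2*A 1 0*A 2 1*A 4 4 - A 0 2*A 1 0*A 2 4*A 4 1 - A 0 2*A 1 1*A 2 0*A 4 4 + A 0 2*A 1 1*A 2 4*A 4 0 + A 0 2*A 1 4*A 2 0*A 4 1 - A 0 2*A 1 4*A 2 1*A 4 0 - A 0 4*A 1 0*A 2 1*A 4 2 + A 0 4*A 1 0*A 2 2*A 4 1 + A 0 4*A 1 1*A 2 0*A 4 2 - A 0 4*A 1 1*A 2 2*A 4 0 - A 0 4*A 1 2*A 2 0*A 4 1 + A 0 4*A 1 2*A 2 1*A 4 0 + A 0 0*A 1 1*A 3 3*A 4 4 - A 0 0*A 1 1*A 3 4*A 4 3 -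 A 0 0*A 1 3*A 3 1*A 4 4 + A 0 0*A 1 3*A 3 4*A 4 1 + A 0 0*A 1 4*A 3 1*A 4 3 - A 0 0*A 1 4*A 3 3*A 4 1 - A 0 1*A 1 0*A 3 3*A 4 4 + A 0 1*A 1 0*A 3 4*A 4 3 + A 0 1*A 1 3*A 3 0*A 4 4 - A 0 1*A 1 3*A 3 4*A 4 0 - A 0 1*A 1 4*A 3 0*A 4 3 + A 0 1*A 1 4*A 3 3*A 4 0 + A 0 3*A 1 0*A 3 1*A 4 4 - A 0 3*A 1 0*A 3 4*A 4 1 - A 0 3*A 1 1*A 3 0*A 4 4 + A 0 3*A 1 1*A 3 4*A 4 0 + A 0 3*A 1 4*A 3 0*A 4 1 - A 0 3*A 1 4*A 3 1*A 4 0 - A 0 4*A 1 0*A 3 1*A 4 3 + A 0 4*A 1 0*A 3 3*A 4 1 + A 0 4*A 1 1*A 3 0*A 4 3 - A 0 4*A 1 1*A 3 3*A 4 0 - A 0 4*A 1 3*A 3 0*A 4 1 + A 0 4*A 1 3*A 3 1*A 4 0 + A 0 0*A 2 2*A 3 3*A 4 4 - A 0 0*A 2 2*A 3 4*A 4 3 -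 A 0 0*A 2 3*A 3 2*A 4 4 + A 0 0*A 2 3*A 3 4*A 4 2 + A 0 0*A 2 4*A 3 2*A 4 3 - A 0 0*A 2 4*A 3 3*A 4 2 - A 0 2*A 2 0*A 3 3*A 4 4 + A 0 2*A 2 0*A 3 4*A 4 3 + A 0 2*A 2 3*A 3 0*A 4 4 - A 0 2*A 2 3*A 3 4*A 4 0 - A 0 2*A 2 4*A 3 0*A 4 3 + A 0 2*A 2 4*A 3 3*A 4 0 + A 0 3*A 2 0*A 3 2*A 4 4 - A 0 3*A 2 0*A 3 4*A 4 2 - A 0 3*A 2 2*A 3 0*A 4 4 + A 0 3*A 2 2*A 3 4*A 4 0 + A 0 3*A 2 4*A 3 0*A 4 2 - A 0 3*A 2 4*A 3 2*A 4 0 - A 0 4*A 2 0*A 3 2*A 4 3 + A 0 4*A 2 0*A 3 3*A 4 2 + A 0 4*A 2 2*A 3 0*A 4 3 - A 0 4*A 2 2*A 3 3*A 4 0 - A 0 4*A 2 3*A 3 0*A 4 2 + A 0 4*A 2 3*A 3 2*A 4 0 + A 1 1*A 2 2*A 3 3*A 4 4 - A 1 1*A 2 2*A 3 4*A 4 3 -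 A 1 1*A 2 3*A 3 2*A 4 4 + A 1 1*A 2 3*A 3 4*A 4 2 + A 1 1*A 2 4*A 3 2*A 4 3 - A 1 1*A 2 4*A 3 3*A 4 2 - A 1 2*A 2 1*A 3 3*A 4 4 + A 1 2*A 2 1*A 3 4*A 4 3 + A 1 2*A 2 3*A 3 1*A 4 4 - A 1 2*A 2 3*A 3 4*A 4 1 - A 1 2*A 2 4*A 3 1*A 4 3 + A 1 2*A 2 4*A 3 3*A 4 1 + A 1 3*A 2 1*A 3 2*A 4 4 - A 1 3*A 2 1*A 3 4*A 4 2 - A 1 3*A 2 2*A 3 1*A 4 4 + A 1 3*A 2 2*A 3 4*A 4 1 + A 1 3*A 2 4*A 3 1*A 4 2 - A 1 3*A 2 4*A 3 2*A 4 1 - A 1 4*A 2 1*A 3 2*A 4 3 + A 1 4*A 2 1*A 3 3*A 4 2 + A 1 4*A 2 2*A 3 1*A 4 3 - A 1 4*A 2 2*A 3 3*A 4 1 - A 1 4*A 2 3*A 3 1*A 4 2 + A 1 4*A 2 3*A 3 2*A 4 1) * x - (A 0 0*A 1 1*A 2 2*A 3 3*A 4 4 - A 0 0*A 1 1*A 2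 2*A 3 4*A 4 3 - A 0 0*A 1 1*A 2 3*A 3 2*A 4 4 + A 0 0*A 1 1*A 2 3*A 3 4*A 4 2 + A 0 0*A 1 1*A 2 4*A 3 2*A 4 3 - A 0 0*A 1 1*A 2 4*A 3 3*A 4 2 - A 0 0*A 1 2*A 2 1*A 3 3*A 4 4 + A 0 0*A 1 2*A 2 1*A 3 4*A 4 3 + A 0 0*A 1 2*A 2 3*A 3 1*A 4 4 - A 0 0*A 1 2*A 2 3*A 3 4*A 4 1 - A 0 0*A 1 2*A 2 4*A 3 1*A 4 3 + A 0 0*A 1 2*A 2 4*A 3 3*A 4 1 + A 0 0*A 1 3*A 2 1*A 3 2*A 4 4 - A 0 0*A 1 3*A 2 1*A 3 4*A 4 2 - A 0 0*A 1 3*A 2 2*A 3 1*A 4 4 + A 0 0*A 1 3*A 2 2*A 3 4*A 4 1 + A 0 0*A 1 3*A 2 4*A 3 1*A 4 2 - A 0 0*A 1 3*A 2 4*A 3 2*A 4 1 - A 0 0*A 1 4*A 2 1*A 3 2*A 4 3 + A 0 0*A 1 4*A 2 1*A 3 3*A 4 2 + A 0 0*A 1 4*A 2 2*A 3 1*A 4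 3 - A 0 0*A 1 4*A 2 2*A 3 3*A 4 1 - A 0 0*A 1 4*A 2 3*A 3 1*A 4 2 + A 0 0*A 1 4*A 2 3*A 3 2*A 4 1 - A 0 1*A 1 0*A 2 2*A 3 3*A 4 4 + A 0 1*A 1 0*A 2 2*A 3 4*A 4 3 + A 0 1*A 1 0*A 2 3*A 3 2*A 4 4 - A 0 1*A 1 0*A 2 3*A 3 4*A 4 2 - A 0 1*A 1 0*A 2 4*A 3 2*A 4 3 + A 0 1*A 1 0*A 2 4*A 3 3*A 4 2 + A 0 1*A 1 2*A 2 0*A 3 3*A 4 4 - A 0 1*A 1 2*A 2 0*A 3 4*A 4 3 - A 0 1*A 1 2*A 2 3*A 3 0*A 4 4 + A 0 1*A 1 2*A 2 3*A 3 4*A 4 0 + A 0 1*A 1 2*A 2 4*A 3 0*A 4 3 - A 0 1*A 1 2*A 2 4*A 3 3*A 4 0 - A 0 1*A 1 3*A 2 0*A 3 2*A 4 4 + A 0 1*A 1 3*A 2 0*A 3 4*A 4 2 + A 0 1*A 1 3*A 2 2*A 3 0*A 4 4 - A 0 1*A 1 3*A 2 2*A 3 4*A 4 0 - A 0 1*A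 1 3*A 2 4*A 3 0*A 4 2 + A 0 1*A 1 3*A 2 4*A 3 2*A 4 0 + A 0 1*A 1 4*A 2 0*A 3 2*A 4 3 - A 0 1*A 1 4*A 2 0*A 3 3*A 4 2 - A 0 1*A 1 4*A 2 2*A 3 0*A 4 3 + A 0 1*A 1 4*A 2 2*A 3 3*A 4 0 + A 0 1*A 1 4*A 2 3*A 3 0*A 4 2 - A 0 1*A 1 4*A 2 3*A 3 2*A 4 0 + A 0 2*A 1 0*A 2 1*A 3 3*A 4 4 - A 0 2*A 1 0*A 2 1*A 3 4*A 4 3 - A 0 2*A 1 0*A 2 3*A 3 1*A 4 4 + A 0 2*A 1 0*A 2 3*A 3 4*A 4 1 + A 0 2*A 1 0*A 2 4*A 3 1*A 4 3 - A 0 2*A 1 0*A 2 4*A 3 3*A 4 1 - A 0 2*A 1 1*A 2 0*A 3 3*A 4 4 + A 0 2*A 1 1*A 2 0*A 3 4*A 4 3 + A 0 2*A 1 1*A 2 3*A 3 0*A 4 4 - A 0 2*A 1 1*A 2 3*A 3 4*A 4 0 - A 0 2*A 1 1*A 2 4*A 3 0*A 4 3 + A 0 2*A 1 1*A 2 4*A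 3 3*A 4 0 + A 0 2*A 1 3*A 2 0*A 3 1*A 4 4 - A 0 2*A 1 3*A 2 0*A 3 4*A 4 1 - A 0 2*A 1 3*A 2 1*A 3 0*A 4 4 + A 0 2*A 1 3*A 2 1*A 3 4*A 4 0 + A 0 2*A 1 3*A 2 4*A 3 0*A 4 1 - A 0 2*A 1 3*A 2 4*A 3 1*A 4 0 - A 0 2*A 1 4*A 2 0*A 3 1*A 4 3 + A 0 2*A 1 4*A 2 0*A 3 3*A 4 1 + A 0 2*A 1 4*A 2 1*A 3 0*A 4 3 - A 0 2*A 1 4*A 2 1*A 3 3*A 4 0 - A 0 2*A 1 4*A 2 3*A 3 0*A 4 1 + A 0 2*A 1 4*A 2 3*A 3 1*A 4 0 - A 0 3*A 1 0*A 2 1*A 3 2*A 4 4 + A 0 3*A 1 0*A 2 1*A 3 4*A 4 2 + A 0 3*A 1 0*A 2 2*A 3 1*A 4 4 - A 0 3*A 1 0*A 2 2*A 3 4*A 4 1 - A 0 3*A 1 0*A 2 4*A 3 1*A 4 2 + A 0 3*A 1 0*A 2 4*A 3 2*A 4 1 + A 0 3*A 1 1*A 2 0*A 3 2*A 4 4 -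 A 0 3*A 1 1*A 2 0*A 3 4*A 4 2 - A 0 3*A 1 1*A 2 2*A 3 0*A 4 4 + A 0 3*A 1 1*A 2 2*A 3 4*A 4 0 + A 0 3*A 1 1*A 2 4*A 3 0*A 4 2 - A 0 3*A 1 1*A 2 4*A 3 2*A 4 0 - A 0 3*A 1 2*A 2 0*A 3 1*A 4 4 + A 0 3*A 1 2*A 2 0*A 3 4*A 4 1 + A 0 3*A 1 2*A 2 1*A 3 0*A 4 4 - A 0 3*A 1 2*A 2 1*A 3 4*A 4 0 - A 0 3*A 1 2*A 2 4*A 3 0*A 4 1 + A 0 3*A 1 2*A 2 4*A 3 1*A 4 0 + A 0 3*A 1 4*A 2 0*A 3 1*A 4 2 - A 0 3*A 1 4*A 2 0*A 3 2*A 4 1 - A 0 3*A 1 4*A 2 1*A 3 0*A 4 2 + A 0 3*A 1 4*A 2 1*A 3 2*A 4 0 + A 0 3*A 1 4*A 2 2*A 3 0*A 4 1 - A 0 3*A 1 4*A 2 2*A 3 1*A 4 0 + A 0 4*A 1 0*A 2 1*A 3 2*A 4 3 - A 0 4*A 1 0*A 2 1*A 3 3*A 4 2 - A 0 4*A 1 0*A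 2 2*A 3 1*A 4 3 + A 0 4*A 1 0*A 2 2*A 3 3*A 4 1 + A 0 4*A 1 0*A 2 3*A 3 1*A 4 2 - A 0 4*A 1 0*A 2 3*A 3 2*A 4 1 - A 0 4*A 1 1*A 2 0*A 3 2*A 4 3 + A 0 4*A 1 1*A 2 0*A 3 3*A 4 2 + A 0 4*A 1 1*A 2 2*A 3 0*A 4 3 - A 0 4*A 1 1*A 2 2*A 3 3*A 4 0 - A 0 4*A 1 1*A 2 3*A 3 0*A 4 2 + A 0 4*A 1 1*A 2 3*A 3 2*A 4 0 + A 0 4*A 1 2*A 2 0*A 3 1*A 4 3 - A 0 4*A 1 2*A 2 0*A 3 3*A 4 1 - A 0 4*A 1 2*A 2 1*A 3 0*A 4 3 + A 0 4*A 1 2*A 2 1*A 3 3*A 4 0 + A 0 4*A 1 2*A 2 3*A 3 0*A 4 1 - A 0 4*A 1 2*A 2 3*A 3 1*A 4 0 - A 0 4*A 1 3*A 2 0*A 3 1*A 4 2 + A 0 4*A 1 3*A 2 0*A 3 2*A 4 1 + A 0 4*A 1 3*A 2 1*A 3 0*A 4 2 - A 0 4*A 1 3*A 2 1*A 3 2*A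 4 0 - A 0 4*A 1 3*A 2 2*A 3 0*A 4 1 + A 0 4*A 1 3*A 2 2*A 3 1*A 4 0) := by
  have h : A.charpoly.eval x = ((charmatrix A).map (Polynomial.evalRingHom x)).det := by
    rw [Matrix.charpoly, ← Polynomial.coe_evalRingHom, RingHom.map_det,
      RingHom.mapMatrix_apply]
  have h2 : ((charmatrix A).map (Polynomial.evalRingHom x)) =
      Matrix.of (fun i j => (if i = j then x else 0) - A i j) := by
    ext i j
    by_cases hij : i = j <;>
      simp [hij, charmatrix_apply, Matrix.diagonal_apply, Matrix.map_apply]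
  rw [h, h2, det_fin_five']
  simp only [Matrix.of_apply, Fin.reduceEq, reduceIte, sub_zero, zero_sub]
  ring

lemma prodC' (z : ℂ) (p a b c d : ℝ) :
    (z - (p:ℂ)) * (z - ((a:ℂ) + (b:ℂ)*Complex.I)) * (z - ((a:ℂ) - (b:ℂ)*Complex.I))
      * (z - ((c:ℂ) + (d:ℂ)*Complex.I)) * (z - ((c:ℂ) - (d:ℂ)*Complex.I))
    = (z - (p:ℂ)) * ((z - (a:ℂ))^2 + ((b:ℂ))^2) * ((z - (c:ℂ))^2 + ((d:ℂ))^2) := by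
  have h : (Complex.I)^2 = -1 := Complex.I_sq
  linear_combination (z - (p:ℂ)) * (-((z-(a:ℂ))^2)*(d:ℂ)^2 - (b:ℂ)^2*((z-(c:ℂ))^2)
    + (b:ℂ)^2*(d:ℂ)^2*((Complex.I)^2 - 1)) * h

set_option maxHeartbeats 1000000 in
/-- The key construction: a nonnegative `5 × 5` matrix with Perron root `m + 2(u+v)`
and complex eigenvalue pairs `(m-u) ± iβ`, `(m-v) ± iε`. -/
lemma construct (m u v β ε : ℝ) (hm : 0 ≤ m) (hu : 0 ≤ u) (hv : 0 ≤ v)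
    (hs : β^2 + ε^2 ≤ 3*u^2 + 3*v^2 + 4*u*v) :
    ∃ M : Matrix (Fin 5) (Fin 5) ℝ, (∀ i j, 0 ≤ M i j) ∧
      M.charpoly = (X - C (m + 2*(u+v)))
        * (X^2 - C (2*(m-u))*X + C ((m-u)^2 + β^2))
        * (X^2 - C (2*(m-v))*X + C ((m-v)^2 + ε^2)) := by
  refine ⟨!![m,1,0,0,0; 0,m,1,0,0; 0,0,m,1,0; 0,0,0,m,1;
      2*(u+v)*(u^2+β^2)*(v^2+ε^2),
      4*u^2*(v^2+ε^2) + 4*v^2*(u^2+β^2) + 4*u*v*((u^2+β^2)+(v^2+ε^2)) - (u^2+β^2)*(v^2+ε^2),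
      2*u*(u^2+β^2) + 2*v*(v^2+ε^2) + 8*u*v*(u+v),
      3*u^2 + 3*v^2 + 4*u*v - β^2 - ε^2, m], ?_, ?_⟩
  · have hn0 : (0:ℝ) ≤ 2*(u+v)*(u^2+β^2)*(v^2+ε^2) := by positivity
    have hn2 : (0:ℝ) ≤ 2*u*(u^2+β^2) + 2*v*(v^2+ε^2) + 8*u*v*(u+v) := by positivity
    have hn3 : (0:ℝ) ≤ 3*u^2 + 3*v^2 + 4*u*v - β^2 - ε^2 := by linarith
    have hn1 : (0:ℝ) ≤ 4*u^2*(v^2+ε^2) + 4*v^2*(u^2+β^2)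
        + 4*u*v*((u^2+β^2)+(v^2+ε^2)) - (u^2+β^2)*(v^2+ε^2) := by
      have h3 : 0 ≤ u*v := mul_nonneg hu hv
      rcases le_total (β^2) (ε^2) with hcase | hcase
      · have h1 : β^2 * ε^2 ≤ β^2 * (3*u^2 + 3*v^2 + 4*u*v) :=
          mul_le_mul_of_nonneg_left (by linarith [sq_nonneg β]) (sq_nonneg β)
        have h2 : u^2 * β^2 ≤ u^2 * ε^2 := mul_le_mul_of_nonneg_left hcase (sq_nonneg u)
        nlinarith [mul_nonneg (mul_nonneg hu hu) (mul_nonneg hv hv),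
          mul_nonneg (mul_nonneg h3 hu) hu, mul_nonneg (mul_nonneg h3 hv) hv,
          mul_nonneg h3 (sq_nonneg β), mul_nonneg h3 (sq_nonneg ε),
          mul_nonneg (sq_nonneg u) (sq_nonneg ε)]
      · have h1 : β^2 * ε^2 ≤ ε^2 * (3*u^2 + 3*v^2 + 4*u*v) := by
          have := mul_le_mul_of_nonneg_left
            (show β^2 ≤ 3*u^2 + 3*v^2 + 4*u*v by linarith [sq_nonneg ε]) (sq_nonneg ε)
          linarith [this]
        have h2 : v^2 * ε^2 ≤ v^2 * β^2 := mul_le_mul_of_nonneg_left hcase (sq_nonneg v)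
        nlinarith [mul_nonneg (mul_nonneg hu hu) (mul_nonneg hv hv),
          mul_nonneg (mul_nonneg h3 hu) hu, mul_nonneg (mul_nonneg h3 hv) hv,
          mul_nonneg h3 (sq_nonneg β), mul_nonneg h3 (sq_nonneg ε),
          mul_nonneg (sq_nonneg v) (sq_nonneg β)]
    intro i j
    fin_cases i <;> fin_cases j <;>
      simp only [Matrix.cons_val', Matrix.cons_val_zero, Matrix.cons_val_one,
      Matrix.head_cons, Matrix.cons_val_two, Matrix.cons_val_three, Matrix.cons_val_four,
      Matrix.tail_cons, Matrix.head_fin_const, Matrix.empty_val', Matrix.cons_val_fin_one,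
      Matrix.of_apply] <;>
      first
        | exact le_refl 0
        | exact zero_le_one
        | exact hm
        | exact hn0
        | exact hn1
        | exact hn2
        | exact hn3
  · apply Polynomial.funext
    intro x
    rw [eval_charpoly_five]
    simp only [Matrix.cons_val', Matrix.cons_val_zero, Matrix.cons_val_one,
      Matrix.head_cons, Matrix.cons_val_two, Matrix.cons_val_three, Matrix.cons_val_four,
      Matrix.tail_cons, Matrix.head_fin_const, Matrix.empty_val', Matrix.cons_val_fin_one,
      Matrix.of_apply,
      Polynomial.eval_mul, Polynomial.eval_add, Polynomial.eval_sub, Polynomial.eval_pow,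
      Polynomial.eval_X, Polynomial.eval_C]
    ring

end Stmt13Helpers

open Stmt13Helpers

set_option maxHeartbeats 4000000 in
/-- Perturbation of a realizable list of five complex numbers with
Perron root δ and two conjugate pairs a ± ib and c ± id. -/
theorem stmt_13 (δ a b c d : ℝ) (hδ : 0 < δ) (ha : a ≤ 0) (hc : c ≤ 0)
    (hb : 0 ≤ b)
    (hreal : Realizable ![(δ : ℂ), (a : ℂ) + b * Complex.I, (a : ℂ) - b * Complex.I,
      (c : ℂ) + d * Complex.I, (c : ℂ) - d * Complex.I]) :
    ∀ t : ℝ, 0 < t →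
      Realizable ![((δ + 2 * t : ℝ) : ℂ),
        ((a - t : ℝ) : ℂ) + (b - t : ℝ) * Complex.I,
        ((a - t : ℝ) : ℂ) - (b - t : ℝ) * Complex.I,
        (c : ℂ) + d * Complex.I, (c : ℂ) - d * Complex.I] := by
  intro t ht
  obtain ⟨A, hpos, hchar⟩ := hreal
  have hev : ∀ x : ℝ, A.charpoly.eval x = (x-δ)*((x-a)^2+b^2)*((x-c)^2+d^2) := by
    intro x
    have h := congrArg (Polynomial.eval (x:ℂ)) hchar
    rw [Polynomial.eval_map, show ((x:ℂ)) = algebraMap ℝ ℂ x from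
        (congrFun Complex.coe_algebraMap x).symm,
      Polynomial.eval₂_at_apply, Fin.prod_univ_five] at h
    simp only [Matrix.cons_val', Matrix.cons_val_zero, Matrix.cons_val_one,
      Matrix.head_cons, Matrix.cons_val_two, Matrix.cons_val_three, Matrix.cons_val_four,
      Matrix.tail_cons, Matrix.head_fin_const, Matrix.empty_val', Matrix.cons_val_fin_one,
      Matrix.of_apply,
      Polynomial.eval_mul, Polynomial.eval_sub, Polynomial.eval_X, Polynomial.eval_C] at h
    rw [prodC'] at h
    simp only [Complex.coe_algebraMap] at h
    exact_mod_cast h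
  have h0 := hev 0
  have h1 := hev 1
  have hm1 := hev (-1)
  have h2 := hev 2
  have hm2 := hev (-2)
  rw [eval_charpoly_five] at h0 h1 hm1 h2 hm2
  have hdiag : A 0 0 + A 1 1 + A 2 2 + A 3 3 + A 4 4 = δ + 2*a + 2*c := by
    linear_combination (4*h1 + 4*hm1 - h2 - hm2 - 6*h0)/24
  have hs2 : A 0 0^2 + A 1 1^2 + A 2 2^2 + A 3 3^2 + A 4 4^2 + (A 0 1 * A 1 0 + A 0 2 * A 2 0 + A 0 3 * A 3 0 + A 0 4 * A 4 0 + A 1 0 * A 0 1 + A 1 2 * A 2 1 + A 1 3 * A 3 1 + A 1 4 * A 4 1 + A 2 0 * A 0 2 + A 2 1 * A 1 2 + A 2 3 * A 3 2 + A 2 4 * A 4 2 + A 3 0 * A 0 3 + A 3 1 * A 1 3 + A 3 2 * A 2 3 + A 3 4 * A 4 3 + A 4 0 * A 0 4 + A 4 1 * A 1 4 + A 4 2 * A 2 4 + A 4 3 * A 3 4)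
      = δ^2 + 2*a^2 - 2*b^2 + 2*c^2 - 2*d^2 := by
    linear_combination hdiag*(A 0 0 + A 1 1 + A 2 2 + A 3 3 + A 4 4 + δ + 2*a + 2*c)
      + (2*h1 - 2*hm1 - h2 + hm2)/6
  clear h0 h1 hm1 h2 hm2 hev hchar
  have ht0 : 0 ≤ δ + 2*a + 2*c := by
    have p0 := hpos 0 0; have p1 := hpos 1 1; have p2 := hpos 2 2
    have p3 := hpos 3 3; have p4 := hpos 4 4
    linarith [hdiag]
  have hJLL : (δ + 2*a + 2*c)^2 ≤ 5*(δ^2 + 2*a^2 - 2*b^2 + 2*c^2 - 2*d^2) := by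
    have hd2 : (A 0 0 + A 1 1 + A 2 2 + A 3 3 + A 4 4)^2 ≤ 5*(A 0 0^2 + A 1 1^2 + A 2 2^2 + A 3 3^2 + A 4 4^2) := by
      nlinarith [sq_nonneg (A 0 0 - A 1 1), sq_nonneg (A 0 0 - A 2 2), sq_nonneg (A 0 0 - A 3 3), sq_nonneg (A 0 0 - A 4 4), sq_nonneg (A 1 1 - A 2 2), sq_nonneg (A 1 1 - A 3 3), sq_nonneg (A 1 1 - A 4 4), sq_nonneg (A 2 2 - A 3 3), sq_nonneg (A 2 2 - A 4 4), sq_nonneg (A 3 3 - A 4 4)]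
    have hcr : (0:ℝ) ≤ A 0 1 * A 1 0 + A 0 2 * A 2 0 + A 0 3 * A 3 0 + A 0 4 * A 4 0 + A 1 0 * A 0 1 + A 1 2 * A 2 1 + A 1 3 * A 3 1 + A 1 4 * A 4 1 + A 2 0 * A 0 2 + A 2 1 * A 1 2 + A 2 3 * A 3 2 + A 2 4 * A 4 2 + A 3 0 * A 0 3 + A 3 1 * A 1 3 + A 3 2 * A 2 3 + A 3 4 * A 4 3 + A 4 0 * A 0 4 + A 4 1 * A 1 4 + A 4 2 * A 2 4 + A 4 3 * A 3 4 := by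
      linarith [mul_nonneg (hpos 0 1) (hpos 1 0),
      mul_nonneg (hpos 0 2) (hpos 2 0),
      mul_nonneg (hpos 0 3) (hpos 3 0),
      mul_nonneg (hpos 0 4) (hpos 4 0),
      mul_nonneg (hpos 1 0) (hpos 0 1),
      mul_nonneg (hpos 1 2) (hpos 2 1),
      mul_nonneg (hpos 1 3) (hpos 3 1),
      mul_nonneg (hpos 1 4) (hpos 4 1),
      mul_nonneg (hpos 2 0) (hpos 0 2),
      mul_nonneg (hpos 2 1) (hpos 1 2),
      mul_nonneg (hpos 2 3) (hpos 3 2),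
      mul_nonneg (hpos 2 4) (hpos 4 2),
      mul_nonneg (hpos 3 0) (hpos 0 3),
      mul_nonneg (hpos 3 1) (hpos 1 3),
      mul_nonneg (hpos 3 2) (hpos 2 3),
      mul_nonneg (hpos 3 4) (hpos 4 3),
      mul_nonneg (hpos 4 0) (hpos 0 4),
      mul_nonneg (hpos 4 1) (hpos 1 4),
      mul_nonneg (hpos 4 2) (hpos 2 4),
      mul_nonneg (hpos 4 3) (hpos 3 4)]
    have hsq : (δ + 2*a + 2*c)^2 = (A 0 0 + A 1 1 + A 2 2 + A 3 3 + A 4 4)^2 := by rw [hdiag]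
    rw [hsq, ← hs2]
    linarith
  set m : ℝ := (δ + 2*a + 2*c)/5 with hm_def
  have hm : 0 ≤ m := by rw [hm_def]; linarith
  have hu : 0 ≤ m - a + t := by linarith
  have hv : 0 ≤ m - c := by linarith
  have hs : (b-t)^2 + d^2 ≤ 3*(m-a+t)^2 + 3*(m-c)^2 + 4*(m-a+t)*(m-c) := by
    rw [hm_def]
    nlinarith [hJLL, mul_pos ht hδ, mul_pos ht ht, mul_nonneg ht.le hb,
      mul_nonneg ht.le (neg_nonneg.2 ha)]
  obtain ⟨M, hMpos, hMchar⟩ := construct m (m-a+t) (m-c) (b-t) d hm hu hv hs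
  refine ⟨M, hMpos, ?_⟩
  rw [hMchar]
  simp only [Polynomial.map_mul, Polynomial.map_sub, Polynomial.map_add,
    Polynomial.map_pow, Polynomial.map_X, Polynomial.map_C, Complex.coe_algebraMap]
  apply Polynomial.funext
  intro z
  rw [Fin.prod_univ_five]
  simp only [Matrix.cons_val', Matrix.cons_val_zero, Matrix.cons_val_one,
      Matrix.head_cons, Matrix.cons_val_two, Matrix.cons_val_three, Matrix.cons_val_four,
      Matrix.tail_cons, Matrix.head_fin_const, Matrix.empty_val', Matrix.cons_val_fin_one,
      Matrix.of_apply,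
    Polynomial.eval_mul, Polynomial.eval_add, Polynomial.eval_sub, Polynomial.eval_pow,
    Polynomial.eval_X, Polynomial.eval_C]
  rw [prodC' z (δ + 2*t) (a-t) (b-t) c d, hm_def]
  push_cast
  ring
end
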